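/- arXiv:1502.04968 — 14 statements merged into one kernel-verified Lean document; each statement's English description precedes it below -/
import Mathlib

section
/- Let (a_n) and (b_n) be two sequences of nonnegative real numbers and let α₀, β ∈ (0,1) be such that for every α ∈ (0, α₀) and every n ≥ 1 the inequality a_{n+1} + b_{n+1} ≤ (1 − 2α) a_n + α a_{n−1} + β b_n holds. Then there exist γ ∈ (0,1) and M > 0 such that a_n ≤ γ^n · M for every n > 0. -/
/-- Lemma 2.9: if `(a_n)`, `(b_n)` are nonnegative real sequences and `α₀, β ∈ (0,1)`
are such that for all `α ∈ (0, α₀)` and all `n ≥ 1`,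
`a_{n+1} + b_{n+1} ≤ (1 - 2α) a_n + α a_{n-1} + β b_n`,
then there are `γ ∈ (0,1)` and `M > 0` with `a_n ≤ γ^n M` for all `n > 0`. -/
theorem linear_rate_of_recursive_ineq
    (a b : ℕ → ℝ) (ha : ∀ n, 0 ≤ a n) (hb : ∀ n, 0 ≤ b n)
    (α₀ β : ℝ) (hα₀ : α₀ ∈ Set.Ioo (0 : ℝ) 1) (hβ : β ∈ Set.Ioo (0 : ℝ) 1)
    (h : ∀ α ∈ Set.Ioo (0 : ℝ) α₀, ∀ n : ℕ, 1 ≤ n →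
      a (n + 1) + b (n + 1) ≤ (1 - 2 * α) * a n + α * a (n - 1) + β * b n) :
    ∃ γ ∈ Set.Ioo (0 : ℝ) 1, ∃ M > (0 : ℝ), ∀ n : ℕ, 0 < n → a n ≤ γ ^ n * M := by
  obtain ⟨hα₀0, hα₀1⟩ := hα₀
  obtain ⟨hβ0, hβ1⟩ := hβ
  set α : ℝ := α₀ / 2 with hαdef
  have hα0 : 0 < α := by positivity
  have hαlt : α < α₀ := by linarith
  have hα1 : α < 1 := by linarith
  set D : ℝ := Real.sqrt (1 + 4 * α ^ 2) with hDdef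
  have hDsq : D ^ 2 = 1 + 4 * α ^ 2 := Real.sq_sqrt (by positivity)
  have hD0 : 0 < D := Real.sqrt_pos.mpr (by positivity)
  have hD1 : 1 ≤ D := by nlinarith [hDsq, hD0]
  have hDle : D ≤ 1 + 2 * α ^ 2 := by nlinarith [hDsq, hD0]
  set r : ℝ := ((1 - 2 * α) + D) / 2 with hrdef
  set s : ℝ := (1 - 2 * α) - r with hsdef
  have hr0 : 0 < r := by rw [hrdef]; nlinarith
  have hr1 : r < 1 := by rw [hrdef]; nlinarith
  have hs0 : s < 0 := by rw [hsdef, hrdef]; nlinarith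
  have hrs : r * s = -α := by rw [hsdef, hrdef]; nlinarith [hDsq]
  set γ : ℝ := max r β with hγ
  have hγ0 : 0 < γ := lt_of_lt_of_le hr0 (le_max_left _ _)
  have hγ1 : γ < 1 := max_lt hr1 hβ1
  have hrγ : r ≤ γ := le_max_left _ _
  have hβγ : β ≤ γ := le_max_right _ _
  set V1 : ℝ := a 1 - s * a 0 + b 1 with hV1
  -- key induction
  have main : ∀ m : ℕ, a (m + 1) - s * a m + b (m + 1) ≤ γ ^ m * V1 := by
    intro m
    induction m with
    | zero => simp [hV1]
    | succ m ih =>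
      have key := h α ⟨hα0, hαlt⟩ (m + 1) (by omega)
      simp only [Nat.add_sub_cancel] at key
      have nonneg : 0 ≤ a (m + 1) - s * a m := by
        have := mul_nonneg (neg_nonneg.mpr hs0.le) (ha m)
        have := ha (m + 1); linarith
      have e1 : (1 : ℝ) - 2 * α = r + s := by rw [hsdef]; ring
      have expand : (1 - 2 * α) * a (m + 1) + α * a m
          = r * (a (m + 1) - s * a m) + s * a (m + 1) := by
        linear_combination a (m + 1) * e1 + a m * hrs
      have step1 : a (m + 2) - s * a (m + 1) + b (m + 2)
          ≤ r * (a (m + 1) - s * a m) + β * b (m + 1) := by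
        linarith [key, expand]
      have step2 : r * (a (m + 1) - s * a m) + β * b (m + 1)
          ≤ γ * (a (m + 1) - s * a m + b (m + 1)) := by
        have t1 := mul_le_mul_of_nonneg_right hrγ nonneg
        have t2 := mul_le_mul_of_nonneg_right hβγ (hb (m + 1))
        have t3 : γ * (a (m + 1) - s * a m + b (m + 1))
            = γ * (a (m + 1) - s * a m) + γ * b (m + 1) := by ring
        linarith
      have step3 : γ * (a (m + 1) - s * a m + b (m + 1)) ≤ γ * (γ ^ m * V1) :=
        mul_le_mul_of_nonneg_left ih (le_of_lt hγ0)
      calc a (m + 1 + 1) - s * a (m + 1) + b (m + 1 + 1)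
          ≤ r * (a (m + 1) - s * a m) + β * b (m + 1) := step1
        _ ≤ γ * (a (m + 1) - s * a m + b (m + 1)) := step2
        _ ≤ γ * (γ ^ m * V1) := step3
        _ = γ ^ (m + 1) * V1 := by ring
  have hV1nn : 0 ≤ V1 := by
    have := mul_nonneg (neg_nonneg.mpr hs0.le) (ha 0)
    have := ha 1; have := hb 1; linarith
  refine ⟨γ, ⟨hγ0, hγ1⟩, V1 / γ + 1, by positivity, ?_⟩
  intro n hn
  obtain ⟨m, rfl⟩ : ∃ m, n = m + 1 := ⟨n - 1, by omega⟩
  have h1 : a (m + 1) ≤ γ ^ m * V1 := by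
    have := mul_nonneg (neg_nonneg.mpr hs0.le) (ha m)
    linarith [main m, hb (m + 1)]
  have h2 : γ ^ m * V1 = γ ^ (m + 1) * (V1 / γ) := by
    field_simp; ring
  have h3 : γ ^ (m + 1) * (V1 / γ) ≤ γ ^ (m + 1) * (V1 / γ + 1) :=
    mul_le_mul_of_nonneg_left (by linarith) (by positivity)
  exact (h1.trans h2.le).trans h3
end

section
/- Let H be a real Hilbert space, C ⊆ H a nonempty closed convex set with metric projection P_C, F : H → H any map and λ > 0. Let x_{n−1} ∈ C, y_{n−1} ∈ H, set x_n = P_C(x_{n−1} − λ F(y_{n−1})) and y_n = 2x_n − x_{n−1}, and let x_{n+1} ∈ C. Then 2λ ⟨F(y_{n−1}), y_n − x_{n+1}⟩ ≤ ‖x_{n+1} − x_n‖² − ‖x_n − y_n‖² − ‖x_{n+1} − y_n‖². -/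
open RealInnerProductSpace

/-- Estimate (3.4): with `x_n = P_C (x_{n-1} - λ F y_{n-1})`, `y_n = 2 x_n - x_{n-1}`
and any `x_{n+1} ∈ C`,
`2λ ⟨F y_{n-1}, y_n - x_{n+1}⟩ ≤ ‖x_{n+1} - x_n‖² - ‖x_n - y_n‖² - ‖x_{n+1} - y_n‖²`. -/
theorem reflected_step_estimate
    {H : Type*} [NormedAddCommGroup H] [InnerProductSpace ℝ H] [CompleteSpace H]
    (C : Set H) (hC : C.Nonempty) (hCclosed : IsClosed C) (hCconv : Convex ℝ C)
    (P : H → H)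
    (hPmem : ∀ u : H, P u ∈ C)
    (hPchar : ∀ u : H, ∀ y ∈ C, 0 ≤ ⟪P u - u, y - P u⟫)
    (F : H → H) (lam : ℝ) (hlam : 0 < lam)
    (xprev : H) (hxprev : xprev ∈ C) (yprev : H)
    (xn yn xnext : H)
    (hxn : xn = P (xprev - lam • F yprev))
    (hyn : yn = (2 : ℝ) • xn - xprev)
    (hxnext : xnext ∈ C) :
    2 * lam * ⟪F yprev, yn - xnext⟫ ≤
      ‖xnext - xn‖ ^ 2 - ‖xn - yn‖ ^ 2 - ‖xnext - yn‖ ^ 2 := by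
  have h1 := hPchar (xprev - lam • F yprev) xnext hxnext
  have h2 := hPchar (xprev - lam • F yprev) xprev hxprev
  rw [← hxn] at h1 h2
  subst hyn
  have e1 : ∀ v : H, ‖v‖ ^ 2 = ⟪v, v⟫ := fun v => (real_inner_self_eq_norm_sq v).symm
  simp only [e1, inner_sub_left, inner_sub_right, inner_smul_left, inner_smul_right,
    two_smul, inner_add_left, inner_add_right, RCLike.ofReal_real_eq_id, id_eq, conj_trivial] at *
  have hsym := fun a b : H => real_inner_comm a b
  nlinarith [hsym (F yprev) xnext, hsym (F yprev) xn, hsym (F yprev) xprev,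
    hsym xn xnext, hsym xn xprev, hsym xprev xnext]
end

section
/- Let H be a real Hilbert space and F : H → H be Lipschitz-continuous with constant L > 0. Let λ > 0 and let x_{n−1}, x_n, x_{n+1}, y_{n−1} ∈ H, and set y_n = 2x_n − x_{n−1}. Then 2λ ⟨F(y_n) − F(y_{n−1}), y_n − x_{n+1}⟩ ≤ λL(1+√2) ‖y_n − x_n‖² + λL ‖x_n − y_{n−1}‖² + √2 λL ‖x_{n+1} − y_n‖². -/
open RealInnerProductSpace

/-- Estimate (3.5): for `F` Lipschitz with constant `L > 0`, `λ > 0` and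
`y_n = 2 x_n - x_{n-1}`,
`2λ ⟨F y_n - F y_{n-1}, y_n - x_{n+1}⟩
  ≤ λL(1+√2)‖y_n - x_n‖² + λL‖x_n - y_{n-1}‖² + √2 λL ‖x_{n+1} - y_n‖²`. -/
theorem lipschitz_cross_estimate
    {H : Type*} [NormedAddCommGroup H] [InnerProductSpace ℝ H] [CompleteSpace H]
    (F : H → H) (L : ℝ) (hL : 0 < L)
    (hlip : ∀ x y : H, ‖F x - F y‖ ≤ L * ‖x - y‖)
    (lam : ℝ) (hlam : 0 < lam)
    (xprev xn xnext yprev yn : H)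
    (hyn : yn = (2 : ℝ) • xn - xprev) :
    2 * lam * ⟪F yn - F yprev, yn - xnext⟫ ≤
      lam * L * (1 + Real.sqrt 2) * ‖yn - xn‖ ^ 2
        + lam * L * ‖xn - yprev‖ ^ 2
        + Real.sqrt 2 * lam * L * ‖xnext - yn‖ ^ 2 := by
  set a := ‖yn - xn‖ with ha
  set b := ‖xn - yprev‖ with hb
  set c := ‖xnext - yn‖ with hc
  have ha0 : 0 ≤ a := norm_nonneg _
  have hb0 : 0 ≤ b := norm_nonneg _
  have hc0 : 0 ≤ c := norm_nonneg _
  have hs : Real.sqrt 2 ^ 2 = 2 := Real.sq_sqrt (by norm_num)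
  have hs1 : 1 ≤ Real.sqrt 2 := by
    nlinarith [Real.sqrt_nonneg 2]
  have h1 : ⟪F yn - F yprev, yn - xnext⟫ ≤ ‖F yn - F yprev‖ * ‖yn - xnext‖ :=
    real_inner_le_norm _ _
  have h2 : ‖F yn - F yprev‖ ≤ L * ‖yn - yprev‖ := hlip _ _
  have h3 : ‖yn - yprev‖ ≤ a + b := by
    calc ‖yn - yprev‖ = ‖(yn - xn) + (xn - yprev)‖ := by rw [sub_add_sub_cancel]
      _ ≤ a + b := norm_add_le _ _
  have h4 : ‖yn - xnext‖ = c := (norm_sub_rev _ _)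
  have h5 : ⟪F yn - F yprev, yn - xnext⟫ ≤ L * (a + b) * c := by
    calc ⟪F yn - F yprev, yn - xnext⟫ ≤ ‖F yn - F yprev‖ * ‖yn - xnext‖ := h1
      _ = ‖F yn - F yprev‖ * c := by rw [h4]
      _ ≤ (L * ‖yn - yprev‖) * c := by
          exact mul_le_mul_of_nonneg_right h2 hc0
      _ ≤ L * (a + b) * c := by
          have := mul_le_mul_of_nonneg_left h3 hL.le
          exact mul_le_mul_of_nonneg_right this hc0
  -- key algebraic inequality: 2(a+b)c ≤ (1+√2)a² + b² + √2 c²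
  have key : 2 * ((a + b) * c) ≤ (1 + Real.sqrt 2) * a ^ 2 + b ^ 2 + Real.sqrt 2 * c ^ 2 := by
    nlinarith [sq_nonneg ((1 + Real.sqrt 2) * a - c), sq_nonneg (b - c), Real.sqrt_nonneg 2,
      sq_nonneg (a - c), sq_nonneg a]
  have hll : 0 ≤ lam * L := by positivity
  nlinarith [mul_le_mul_of_nonneg_left h5 (by positivity : (0:ℝ) ≤ 2 * lam),
    mul_le_mul_of_nonneg_left key hll]
end

section
/- Let (x_n) and (y_n) be the sequences generated by the projected reflected gradient algorithm: x_0 = y_0 ∈ C, x_{n+1} = P_C(x_n − λ F(y_n)) and y_{n+1} = 2x_{n+1} − x_n, where λ ∈ (0, (√2 − 1)/L). Then for every z ∈ S and every n ≥ 1: ‖x_{n+1} − z‖² ≤ ‖x_n − z‖² − (1 − λL(1+√2)) ‖x_n − x_{n−1}‖² + λL ‖x_n − y_{n−1}‖² − (1 − √2 λL) ‖x_{n+1} − y_n‖² − 2λ ⟨F(z), y_n − z⟩. -/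
open RealInnerProductSpace


private lemma amgm1 (s a c : ℝ) (hs2 : s ^ 2 = 2) (hs1 : 1 ≤ s) :
    2 * (a * c) ≤ (1 + s) * a ^ 2 + (s - 1) * c ^ 2 := by
  have key : (s + 1) * ((1 + s) * a ^ 2 + (s - 1) * c ^ 2 - 2 * (a * c))
      = ((s + 1) * a - c) ^ 2 := by linear_combination c ^ 2 * hs2
  nlinarith [sq_nonneg ((s + 1) * a - c), hs1, key]

private lemma amgm2 (b c : ℝ) : 2 * (b * c) ≤ b ^ 2 + c ^ 2 := by nlinarith [sq_nonneg (b - c)]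

set_option maxHeartbeats 1000000 in
/-- Lemma 3.2: the key inequality for the projected reflected gradient algorithm. -/
theorem key_inequality
    {H : Type*} [NormedAddCommGroup H] [InnerProductSpace ℝ H] [CompleteSpace H]
    (C : Set H) (hC : C.Nonempty) (hCclosed : IsClosed C) (hCconv : Convex ℝ C)
    (P : H → H)
    (hPmem : ∀ u : H, P u ∈ C)
    (hPchar : ∀ u : H, ∀ y ∈ C, 0 ≤ ⟪P u - u, y - P u⟫)
    (F : H → H)
    (hmono : ∀ x y : H, 0 ≤ ⟪F x - F y, x - y⟫)
    (L : ℝ) (hL : 0 < L)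
    (hlip : ∀ x y : H, ‖F x - F y‖ ≤ L * ‖x - y‖)
    (lam : ℝ) (hlam : lam ∈ Set.Ioo (0 : ℝ) ((Real.sqrt 2 - 1) / L))
    (x y : ℕ → H)
    (hx0 : x 0 ∈ C) (hy0 : y 0 = x 0)
    (hxrec : ∀ n : ℕ, x (n + 1) = P (x n - lam • F (y n)))
    (hyrec : ∀ n : ℕ, y (n + 1) = (2 : ℝ) • x (n + 1) - x n)
    (z : H) (hzC : z ∈ C) (hzS : ∀ w ∈ C, 0 ≤ ⟪F z, w - z⟫)
    (n : ℕ) (hn : 1 ≤ n) :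
    ‖x (n + 1) - z‖ ^ 2 ≤
      ‖x n - z‖ ^ 2
        - (1 - lam * L * (1 + Real.sqrt 2)) * ‖x n - x (n - 1)‖ ^ 2
        + lam * L * ‖x n - y (n - 1)‖ ^ 2
        - (1 - Real.sqrt 2 * lam * L) * ‖x (n + 1) - y n‖ ^ 2
        - 2 * lam * ⟪F z, y n - z⟫ := by
  obtain ⟨m, rfl⟩ : ∃ m, n = m + 1 := ⟨n - 1, (Nat.succ_pred_eq_of_pos hn).symm⟩
  simp only [Nat.add_sub_cancel]
  obtain ⟨hlam0, _⟩ := hlam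
  have hxC : ∀ k, x k ∈ C := fun k => by
    cases k with
    | zero => exact hx0
    | succ k => rw [hxrec k]; exact hPmem _
  have hs2 : Real.sqrt 2 ^ 2 = 2 := Real.sq_sqrt (by norm_num)
  have hs1 : (1:ℝ) ≤ Real.sqrt 2 := by nlinarith [Real.sqrt_nonneg 2]
  have hyn : y (m + 1) = (2 : ℝ) • x (m + 1) - x m := hyrec m
  -- Projection characterization instances
  have F1 : 0 ≤ ⟪x (m+1+1) - x (m+1), z - x (m+1+1)⟫ + lam * ⟪F (y (m+1)), z - x (m+1+1)⟫ := by
    have h := hPchar (x (m+1) - lam • F (y (m+1))) z hzC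
    rw [← hxrec (m+1)] at h
    rw [show x (m+1+1) - (x (m+1) - lam • F (y (m+1))) = (x (m+1+1) - x (m+1)) + lam • F (y (m+1)) from by abel] at h
    rwa [inner_add_left, real_inner_smul_left] at h
  have F2 : 0 ≤ ⟪x (m+1) - x m, x (m+1+1) - x (m+1)⟫ + lam * ⟪F (y m), x (m+1+1) - x (m+1)⟫ := by
    have h := hPchar (x m - lam • F (y m)) (x (m+1+1)) (hxC (m+1+1))
    rw [← hxrec m] at h
    rw [show x (m+1) - (x m - lam • F (y m)) = (x (m+1) - x m) + lam • F (y m) from by abel] at h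
    rwa [inner_add_left, real_inner_smul_left] at h
  have F3 : 0 ≤ -‖x (m+1) - x m‖^2 + lam * ⟪F (y m), x m - x (m+1)⟫ := by
    have h := hPchar (x m - lam • F (y m)) (x m) (hxC m)
    rw [← hxrec m] at h
    rw [show x (m+1) - (x m - lam • F (y m)) = (x (m+1) - x m) + lam • F (y m) from by abel] at h
    rw [inner_add_left, real_inner_smul_left] at h
    have e : ⟪x (m+1) - x m, x m - x (m+1)⟫ = -‖x (m+1) - x m‖^2 := by
      rw [show x m - x (m+1) = -(x (m+1) - x m) from by abel, inner_neg_right,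
        real_inner_self_eq_norm_sq]
    linarith [h, e.ge, e.le]
  -- Monotonicity
  have F4' : lam * ⟪F z, y (m+1) - z⟫ ≤ lam * ⟪F (y (m+1)), y (m+1) - z⟫ := by
    have hm := hmono (y (m+1)) z
    rw [inner_sub_left] at hm
    exact mul_le_mul_of_nonneg_left (by linarith) hlam0.le
  -- inner-product decompositions (multiplied by lam)
  have D1' : lam * ⟪F (y (m+1)), z - x (m+1+1)⟫
      = lam * ⟪F (y (m+1)), z - y (m+1)⟫ + lam * ⟪F (y (m+1)), y (m+1) - x (m+1+1)⟫ := by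
    rw [← mul_add, ← inner_add_right,
      show z - y (m+1) + (y (m+1) - x (m+1+1)) = z - x (m+1+1) from by abel]
  have D4' : lam * ⟪F (y (m+1)), z - y (m+1)⟫ = -(lam * ⟪F (y (m+1)), y (m+1) - z⟫) := by
    rw [show z - y (m+1) = -(y (m+1) - z) from by abel, inner_neg_right]; ring
  have D2' : lam * ⟪F (y (m+1)), y (m+1) - x (m+1+1)⟫
      = lam * ⟪F (y (m+1)) - F (y m), y (m+1) - x (m+1+1)⟫
        + lam * ⟪F (y m), y (m+1) - x (m+1+1)⟫ := by
    rw [← mul_add, ← inner_add_left,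
      show F (y (m+1)) - F (y m) + F (y m) = F (y (m+1)) from by abel]
  have D3' : lam * ⟪F (y m), y (m+1) - x (m+1+1)⟫
      = -(lam * ⟪F (y m), x (m+1+1) - x (m+1)⟫) - lam * ⟪F (y m), x m - x (m+1)⟫ := by
    rw [hyn,
      show (2:ℝ) • x (m+1) - x m - x (m+1+1) = -((x (m+1+1) - x (m+1)) + (x m - x (m+1))) from by
        module,
      inner_neg_right, inner_add_right]
    ring
  -- norm identities
  have I1 : ‖x (m+1+1) - z‖^2
      = ‖x (m+1) - z‖^2 - ‖x (m+1+1) - x (m+1)‖^2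
        - 2 * ⟪x (m+1+1) - x (m+1), z - x (m+1+1)⟫ := by
    have h := norm_sub_sq_real (x (m+1+1) - x (m+1)) (z - x (m+1))
    rw [show x (m+1+1) - x (m+1) - (z - x (m+1)) = x (m+1+1) - z from by abel] at h
    have h2 : ⟪x (m+1+1) - x (m+1), z - x (m+1+1)⟫
        = ⟪x (m+1+1) - x (m+1), z - x (m+1)⟫ - ‖x (m+1+1) - x (m+1)‖^2 := by
      rw [show z - x (m+1+1) = (z - x (m+1)) - (x (m+1+1) - x (m+1)) from by abel,
        inner_sub_right, real_inner_self_eq_norm_sq]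
    have h3 : ‖z - x (m+1)‖ = ‖x (m+1) - z‖ := norm_sub_rev _ _
    rw [h3] at h
    rw [h2]
    linarith [h]
  have I3 : -‖x (m+1+1) - x (m+1)‖^2 + 2 * ⟪x (m+1) - x m, x (m+1+1) - x (m+1)⟫
      = ‖x (m+1) - x m‖^2 - ‖x (m+1+1) - y (m+1)‖^2 := by
    have h := norm_sub_sq_real (x (m+1+1) - x (m+1)) (x (m+1) - x m)
    rw [show x (m+1+1) - x (m+1) - (x (m+1) - x m) = x (m+1+1) - y (m+1) from by
      rw [hyn]; module] at h
    have h2 : ⟪x (m+1+1) - x (m+1), x (m+1) - x m⟫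
        = ⟪x (m+1) - x m, x (m+1+1) - x (m+1)⟫ := real_inner_comm _ _
    linarith [h, h2.le, h2.ge]
  -- Lipschitz estimate
  have hnr : ‖y (m+1) - x (m+1+1)‖ = ‖x (m+1+1) - y (m+1)‖ := norm_sub_rev _ _
  have htr : ‖y (m+1) - y m‖ ≤ ‖x (m+1) - x m‖ + ‖x (m+1) - y m‖ := by
    rw [hyn, show (2:ℝ) • x (m+1) - x m - y m = (x (m+1) - x m) + (x (m+1) - y m) from by module]
    exact norm_add_le _ _
  have F5 : ⟪F (y (m+1)) - F (y m), y (m+1) - x (m+1+1)⟫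
      ≤ L * ((‖x (m+1) - x m‖ + ‖x (m+1) - y m‖) * ‖x (m+1+1) - y (m+1)‖) := by
    calc ⟪F (y (m+1)) - F (y m), y (m+1) - x (m+1+1)⟫
        ≤ ‖F (y (m+1)) - F (y m)‖ * ‖y (m+1) - x (m+1+1)‖ := real_inner_le_norm _ _
      _ ≤ (L * (‖x (m+1) - x m‖ + ‖x (m+1) - y m‖)) * ‖y (m+1) - x (m+1+1)‖ := by
          apply mul_le_mul_of_nonneg_right _ (norm_nonneg _)
          exact (hlip _ _).trans (mul_le_mul_of_nonneg_left htr hL.le)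
      _ = L * ((‖x (m+1) - x m‖ + ‖x (m+1) - y m‖) * ‖x (m+1+1) - y (m+1)‖) := by
          rw [hnr]; ring
  have hac : 2 * (‖x (m+1) - x m‖ * ‖x (m+1+1) - y (m+1)‖)
      ≤ (1 + Real.sqrt 2) * ‖x (m+1) - x m‖^2
        + (Real.sqrt 2 - 1) * ‖x (m+1+1) - y (m+1)‖^2 :=
    amgm1 _ _ _ hs2 hs1
  have hbc : 2 * (‖x (m+1) - y m‖ * ‖x (m+1+1) - y (m+1)‖)
      ≤ ‖x (m+1) - y m‖^2 + ‖x (m+1+1) - y (m+1)‖^2 := amgm2 _ _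
  have F5' : 2 * lam * ⟪F (y (m+1)) - F (y m), y (m+1) - x (m+1+1)⟫
      ≤ lam * L * ((1 + Real.sqrt 2) * ‖x (m+1) - x m‖^2 + ‖x (m+1) - y m‖^2
          + Real.sqrt 2 * ‖x (m+1+1) - y (m+1)‖^2) := by
    have t1 := mul_le_mul_of_nonneg_left F5 (by linarith : (0:ℝ) ≤ 2 * lam)
    have t2 := mul_le_mul_of_nonneg_left hac (mul_pos hlam0 hL).le
    have t3 := mul_le_mul_of_nonneg_left hbc (mul_pos hlam0 hL).le
    linarith [t1, t2, t3]
  linarith [I1, F1, D1', D4', D2', D3', F2, F3, F4', I3, F5']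
end

section
/- Let (x_n) and (y_n) be the sequences generated by the projected reflected gradient algorithm: x_0 = y_0 ∈ C, x_{n+1} = P_C(x_n − λ F(y_n)) and y_{n+1} = 2x_{n+1} − x_n, where λ ∈ (0, (√2 − 1)/L), and let z ∈ S. Then for every n ≥ 1: ‖x_{n+1} − z‖² + λL ‖x_{n+1} − y_n‖² + 2λ ⟨F(z), x_n − z⟩ ≤ ‖x_n − z‖² + λL ‖x_n − y_{n−1}‖² + 2λ ⟨F(z), x_{n−1} − z⟩ − (1 − λL(1+√2)) ‖x_n − x_{n−1}‖². -/
open RealInnerProductSpace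

private lemma three_point' {H : Type*} [NormedAddCommGroup H] [InnerProductSpace ℝ H]
    (p q w : H) : 2 * ⟪q - p, w - q⟫ = ‖p - w‖ ^ 2 - ‖q - w‖ ^ 2 - ‖q - p‖ ^ 2 := by
  simp only [← real_inner_self_eq_norm_sq, inner_sub_left, inner_sub_right]
  linarith [real_inner_comm p w, real_inner_comm q w, real_inner_comm q p]

set_option maxHeartbeats 4000000 in
/-- Inequality (3.6): a Fejér-type inequality for the projected reflected gradient
algorithm. -/
theorem fejer_type_inequality
    {H : Type*} [NormedAddCommGroup H] [InnerProductSpace ℝ H] [CompleteSpace H]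
    (C : Set H) (hC : C.Nonempty) (hCclosed : IsClosed C) (hCconv : Convex ℝ C)
    (P : H → H)
    (hPmem : ∀ u : H, P u ∈ C)
    (hPchar : ∀ u : H, ∀ y ∈ C, 0 ≤ ⟪P u - u, y - P u⟫)
    (F : H → H)
    (hmono : ∀ x y : H, 0 ≤ ⟪F x - F y, x - y⟫)
    (L : ℝ) (hL : 0 < L)
    (hlip : ∀ x y : H, ‖F x - F y‖ ≤ L * ‖x - y‖)
    (lam : ℝ) (hlam : lam ∈ Set.Ioo (0 : ℝ) ((Real.sqrt 2 - 1) / L))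
    (x y : ℕ → H)
    (hx0 : x 0 ∈ C) (hy0 : y 0 = x 0)
    (hxrec : ∀ n : ℕ, x (n + 1) = P (x n - lam • F (y n)))
    (hyrec : ∀ n : ℕ, y (n + 1) = (2 : ℝ) • x (n + 1) - x n)
    (z : H) (hzC : z ∈ C) (hzS : ∀ w ∈ C, 0 ≤ ⟪F z, w - z⟫)
    (n : ℕ) (hn : 1 ≤ n) :
    ‖x (n + 1) - z‖ ^ 2 + lam * L * ‖x (n + 1) - y n‖ ^ 2
        + 2 * lam * ⟪F z, x n - z⟫ ≤
      ‖x n - z‖ ^ 2 + lam * L * ‖x n - y (n - 1)‖ ^ 2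
        + 2 * lam * ⟪F z, x (n - 1) - z⟫
        - (1 - lam * L * (1 + Real.sqrt 2)) * ‖x n - x (n - 1)‖ ^ 2 := by
  obtain ⟨m, rfl⟩ : ∃ m, n = m + 1 := ⟨n - 1, (Nat.succ_pred_eq_of_pos hn).symm⟩
  simp only [Nat.add_sub_cancel]
  have hxC : ∀ k, x k ∈ C := by
    intro k
    cases k with
    | zero => exact hx0
    | succ k => rw [hxrec]; exact hPmem _
  set s : ℝ := Real.sqrt 2 with hs
  have hs0 : (0:ℝ) < s := Real.sqrt_pos.mpr (by norm_num)
  have hs2 : s ^ 2 = 2 := Real.sq_sqrt (by norm_num)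
  clear_value s
  have hs1 : (1:ℝ) < s := by nlinarith [hs2, hs0]
  have ht : lam * L < s - 1 := by
    have := (lt_div_iff₀ hL).mp hlam.2
    linarith
  have hlam0 : 0 < lam := hlam.1
  set p0 := x m with hp0def
  set p1 := x (m + 1) with hp1def
  set p2 := x (m + 1 + 1) with hp2def
  set q0 := y m with hq0def
  set q1 := y (m + 1) with hq1def
  have hp1 : p1 = P (p0 - lam • F q0) := hxrec m
  have hp2 : p2 = P (p1 - lam • F q1) := hxrec (m + 1)
  have hq1 : q1 = (2 : ℝ) • p1 - p0 := hyrec m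
  have hp1C : p1 ∈ C := hxC (m + 1)
  have hp0C : p0 ∈ C := hxC m
  have hp2C : p2 ∈ C := hxC (m + 1 + 1)
  clear_value p0 p1 p2 q0 q1
  set a := ‖p1 - p0‖ with ha
  set b := ‖p2 - q1‖ with hb
  set c := ‖p1 - q0‖ with hc
  set g0 := ⟪F z, p0 - z⟫ with hg0
  set g1 := ⟪F z, p1 - z⟫ with hg1
  have ha0 : (0:ℝ) ≤ a := norm_nonneg _
  have hab0 : (0:ℝ) ≤ b := norm_nonneg _
  have hc0 : (0:ℝ) ≤ c := norm_nonneg _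
  have h5 : 0 ≤ g1 := hzS p1 hp1C
  clear_value a b c g0 g1
  -- projection inequalities
  have h1 : 0 ≤ ⟪p2 - p1 + lam • F q1, z - p2⟫ := by
    have h := hPchar (p1 - lam • F q1) z hzC
    rw [← hp2] at h
    have e : p2 - (p1 - lam • F q1) = p2 - p1 + lam • F q1 := by abel
    rwa [e] at h
  have h2 : 0 ≤ ⟪p1 - p0 + lam • F q0, p2 - p1⟫ := by
    have h := hPchar (p0 - lam • F q0) p2 hp2C
    rw [← hp1] at h
    have e : p1 - (p0 - lam • F q0) = p1 - p0 + lam • F q0 := by abel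
    rwa [e] at h
  have h3 : 0 ≤ ⟪p1 - p0 + lam • F q0, p0 - p1⟫ := by
    have h := hPchar (p0 - lam • F q0) p0 hp0C
    rw [← hp1] at h
    have e : p1 - (p0 - lam • F q0) = p1 - p0 + lam • F q0 := by abel
    rwa [e] at h
  -- k1 : lam * ⟪F q1, p2 - z⟫ ≤ (‖p1-z‖² - ‖p2-z‖² - ‖p2-p1‖²)/2
  have k1 : lam * ⟪F q1, p2 - z⟫ ≤ (‖p1 - z‖ ^ 2 - ‖p2 - z‖ ^ 2 - ‖p2 - p1‖ ^ 2) / 2 := by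
    have tp := three_point' p1 p2 z
    have e1 : ⟪p2 - p1 + lam • F q1, z - p2⟫
        = ⟪p2 - p1, z - p2⟫ + lam * ⟪F q1, z - p2⟫ := by
      rw [inner_add_left, real_inner_smul_left]
    have e2 : ⟪F q1, z - p2⟫ = -⟪F q1, p2 - z⟫ := by
      rw [← inner_neg_right]; congr 1; abel
    rw [e1, e2] at h1
    linarith
  -- k2 : -⟪p1-p0, p2-p1⟫ ≤ lam * ⟪F q0, p2-p1⟫
  have k2 : -⟪p1 - p0, p2 - p1⟫ ≤ lam * ⟪F q0, p2 - p1⟫ := by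
    rw [inner_add_left, real_inner_smul_left] at h2
    linarith
  -- k3 : lam * ⟪F q0, p1 - p0⟫ ≤ -a^2
  have k3 : lam * ⟪F q0, p1 - p0⟫ ≤ -a ^ 2 := by
    rw [inner_add_left, real_inner_smul_left] at h3
    have e : ⟪p1 - p0, p0 - p1⟫ = -‖p1 - p0‖ ^ 2 := by
      rw [show p0 - p1 = -(p1 - p0) by abel, inner_neg_right, real_inner_self_eq_norm_sq]
    have e2 : ⟪F q0, p0 - p1⟫ = -⟪F q0, p1 - p0⟫ := by
      rw [← inner_neg_right]; congr 1; abel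
    rw [e, e2, ← ha] at h3
    linarith
  -- k4 : Lipschitz bound
  have k4 : -(L * ((a + c) * b)) ≤ ⟪F q1 - F q0, p2 - q1⟫ := by
    have hcs := abs_real_inner_le_norm (F q1 - F q0) (p2 - q1)
    rw [← hb] at hcs
    have hl := hlip q1 q0
    have hq : ‖q1 - q0‖ ≤ a + c := by
      have e : q1 - q0 = (p1 - p0) + (p1 - q0) := by rw [hq1, two_smul]; abel
      rw [e, ha, hc]; exact norm_add_le _ _
    have hFb : ‖F q1 - F q0‖ ≤ L * (a + c) :=
      le_trans hl (mul_le_mul_of_nonneg_left hq hL.le)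
    have h5' : ‖F q1 - F q0‖ * b ≤ L * (a + c) * b :=
      mul_le_mul_of_nonneg_right hFb hab0
    have habs := (abs_le.mp hcs).1
    linarith [habs, h5']
  -- monotonicity
  have h4 : 0 ≤ ⟪F q1 - F z, q1 - z⟫ := hmono q1 z
  -- expansion of ⟪F q1, p2 - z⟫
  have Eall : ⟪F q1, p2 - z⟫ = ⟪F q1 - F z, q1 - z⟫ + (2 * g1 - g0)
      + ⟪F q1 - F q0, p2 - q1⟫ + ⟪F q0, p2 - p1⟫ - ⟪F q0, p1 - p0⟫ := by
    rw [hg0, hg1, hq1]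
    simp only [inner_sub_left, inner_sub_right, inner_smul_right, two_smul, inner_add_right]
    ring
  -- lower bound on lam * ⟪F q1, p2 - z⟫
  have m1 : 0 ≤ lam * ⟪F q1 - F z, q1 - z⟫ := mul_nonneg hlam0.le h4
  have m2 : -(lam * (L * ((a + c) * b))) ≤ lam * ⟪F q1 - F q0, p2 - q1⟫ := by
    have := mul_le_mul_of_nonneg_left k4 hlam0.le
    linarith [this]
  have hsum : lam * (2 * g1 - g0) - lam * (L * ((a + c) * b))
      - ⟪p1 - p0, p2 - p1⟫ + a ^ 2 ≤ lam * ⟪F q1, p2 - z⟫ := by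
    rw [Eall]
    linarith [m1, m2, k2, k3]
  -- geometric identity
  have Icomb : 2 * ⟪p1 - p0, p2 - p1⟫ = ‖p2 - p1‖ ^ 2 + a ^ 2 - b ^ 2 := by
    have e : p2 - q1 = (p2 - p1) - (p1 - p0) := by rw [hq1, two_smul]; abel
    have hns := norm_sub_sq_real (p2 - p1) (p1 - p0)
    rw [← e, ← hb, ← ha] at hns
    have hcomm := real_inner_comm (p1 - p0) (p2 - p1)
    linarith
  -- key inequality
  have key : ‖p2 - z‖ ^ 2 ≤ ‖p1 - z‖ ^ 2 - 4 * lam * g1 + 2 * lam * g0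
      + 2 * (lam * L) * ((a + c) * b) - a ^ 2 - b ^ 2 := by
    linarith [k1, hsum, Icomb]
  -- scalar estimates
  have htL : 0 ≤ lam * L := (mul_pos hlam0 hL).le
  have hs3 : s ^ 3 = 2 * s := by rw [pow_succ, hs2]
  have amgm1core : 2 * (a * b) ≤ (1 + s) * a ^ 2 + (s - 1) * b ^ 2 := by
    have e : (s - 1) * ((1 + s) * a - b) ^ 2
        = (1 + s) * a ^ 2 - 2 * (a * b) + (s - 1) * b ^ 2 := by
      linear_combination ((s + 1) * a ^ 2 - 2 * (a * b)) * hs2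
    linarith [mul_nonneg (sub_nonneg.mpr hs1.le) (sq_nonneg ((1 + s) * a - b)), e]
  have amgm2core : 2 * (c * b) ≤ c ^ 2 + b ^ 2 := by linarith [sq_nonneg (c - b)]
  have amgm1 : 2 * (lam * L) * (a * b) ≤ lam * L * ((1 + s) * a ^ 2 + (s - 1) * b ^ 2) := by
    have h := mul_le_mul_of_nonneg_left amgm1core htL
    linarith [h]
  have amgm2 : 2 * (lam * L) * (c * b) ≤ lam * L * (c ^ 2 + b ^ 2) := by
    have h := mul_le_mul_of_nonneg_left amgm2core htL
    linarith [h]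
  have htb : lam * L * (1 + s) ≤ 1 := by
    have h := mul_le_mul_of_nonneg_left ht.le (by positivity : (0:ℝ) ≤ 1 + s)
    linarith [h, hs2]
  have hbb : lam * L * (1 + s) * b ^ 2 ≤ b ^ 2 := by
    have h := mul_le_mul_of_nonneg_right htb (sq_nonneg b)
    linarith
  have hg1pos : 0 ≤ lam * g1 := mul_nonneg hlam0.le h5
  -- final assembly
  show ‖p2 - z‖ ^ 2 + lam * L * b ^ 2 + 2 * lam * g1 ≤
      ‖p1 - z‖ ^ 2 + lam * L * c ^ 2 + 2 * lam * g0
        - (1 - lam * L * (1 + s)) * a ^ 2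
  linarith [key, amgm1, amgm2, hbb, hg1pos]
end

section
/- Let (x_n) and (y_n) be the sequences generated by the projected reflected gradient algorithm: x_0 = y_0 ∈ C, x_{n+1} = P_C(x_n − λ F(y_n)) and y_{n+1} = 2x_{n+1} − x_n, where λ ∈ (0, (√2 − 1)/L). Then the sequence (x_n) is bounded, lim_{n→∞} ‖x_{n+1} − x_n‖ = 0, and lim_{n→∞} ‖x_{n+1} − y_n‖ = 0. -/
set_option maxHeartbeats 2000000


open RealInnerProductSpace

section PRGAux

variable {H : Type*} [NormedAddCommGroup H] [InnerProductSpace ℝ H]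

lemma prg_inner_split (w p q r : H) : ⟪w, p - r⟫ = ⟪w, p - q⟫ + ⟪w, q - r⟫ := by
  rw [← inner_add_right]; congr 1; abel

lemma prg_three_point (u v w : H) :
    ‖u - w‖^2 = ‖v - w‖^2 + ‖u - v‖^2 + 2*⟪u - v, v - w⟫ := by
  have h : u - w = (u - v) + (v - w) := by abel
  rw [h, norm_add_sq_real]; ring

lemma prg_amgm (a s σ ρ : ℝ) (ha0 : 0 < a) (ha : a^2 + 2*a < 1)
    (hs : 0 ≤ s) (hσ : 0 ≤ σ) (hρ : 0 ≤ ρ) :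
    2*a*ρ*s + 2*a*σ*s + (1 - 2*a - a^2)/2 * s^2 + (1 - 2*a - a^2)/4 * ρ^2
      ≤ (1-a)*s^2 + ρ^2 + a*σ^2 := by
  have hK : 0 < 1 - 2*a + a^2 := by nlinarith [sq_nonneg (1 - a)]
  have hq : 8*a^2 ≤ (1 - 2*a + a^2) * (3 + 2*a + a^2) := by
    nlinarith [mul_pos (show (0:ℝ) < 1 - 2*a - a^2 by linarith)
      (show (0:ℝ) < 3 + 2*a - a^2 by nlinarith)]
  nlinarith [mul_nonneg ha0.le (sq_nonneg (s - σ)), sq_nonneg ((1 - 2*a + a^2)*s - 2*a*ρ),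
    mul_nonneg (sub_nonneg.mpr hq) (sq_nonneg ρ), mul_pos hK hK, sq_nonneg s, sq_nonneg ρ]

end PRGAux

/-- Boundedness and asymptotic regularity of the projected reflected gradient
algorithm. -/
theorem bounded_and_asymptotic_regularity
    {H : Type*} [NormedAddCommGroup H] [InnerProductSpace ℝ H] [CompleteSpace H]
    (C : Set H) (hC : C.Nonempty) (hCclosed : IsClosed C) (hCconv : Convex ℝ C)
    (P : H → H)
    (hPmem : ∀ u : H, P u ∈ C)
    (hPchar : ∀ u : H, ∀ y ∈ C, 0 ≤ ⟪P u - u, y - P u⟫)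
    (F : H → H)
    (hmono : ∀ x y : H, 0 ≤ ⟪F x - F y, x - y⟫)
    (L : ℝ) (hL : 0 < L)
    (hlip : ∀ x y : H, ‖F x - F y‖ ≤ L * ‖x - y‖)
    (hS : ∃ z ∈ C, ∀ w ∈ C, 0 ≤ ⟪F z, w - z⟫)
    (lam : ℝ) (hlam : lam ∈ Set.Ioo (0 : ℝ) ((Real.sqrt 2 - 1) / L))
    (x y : ℕ → H)
    (hx0 : x 0 ∈ C) (hy0 : y 0 = x 0)
    (hxrec : ∀ n : ℕ, x (n + 1) = P (x n - lam • F (y n)))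
    (hyrec : ∀ n : ℕ, y (n + 1) = (2 : ℝ) • x (n + 1) - x n) :
    Bornology.IsBounded (Set.range x) ∧
      Filter.Tendsto (fun n : ℕ => ‖x (n + 1) - x n‖) Filter.atTop (nhds 0) ∧
      Filter.Tendsto (fun n : ℕ => ‖x (n + 1) - y n‖) Filter.atTop (nhds 0) := by
  obtain ⟨z, hzC, hz⟩ := hS
  obtain ⟨hlam0, hlam2⟩ := hlam
  obtain ⟨a, ha_def⟩ : ∃ a : ℝ, a = lam * L := ⟨_, rfl⟩
  have ha0 : 0 < a := ha_def ▸ mul_pos hlam0 hL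
  have haroot : a < Real.sqrt 2 - 1 := ha_def ▸ (lt_div_iff₀ hL).mp hlam2
  have hsq2 : Real.sqrt 2 ^ 2 = 2 := Real.sq_sqrt (by norm_num)
  have ha1 : a^2 + 2*a < 1 := by
    have h2 : a + 1 < Real.sqrt 2 := by linarith
    nlinarith [Real.sqrt_nonneg 2]
  have hxC : ∀ n, x n ∈ C := by
    intro n
    cases n with
    | zero => exact hx0
    | succ k => rw [hxrec]; exact hPmem _
  have hchar : ∀ n, ∀ u ∈ C, 0 ≤ ⟪x (n+1) - (x n - lam • F (y n)), u - x (n+1)⟫ := by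
    intro n u hu
    have := hPchar (x n - lam • F (y n)) u hu
    rwa [← hxrec n] at this
  have hA : ∀ n, 0 ≤ ⟪F z, x n - z⟫ := fun n => hz (x n) (hxC n)
  obtain ⟨c1, hc1_def⟩ : ∃ c1 : ℝ, c1 = (1 - 2*a - a^2)/2 := ⟨_, rfl⟩
  obtain ⟨c2, hc2_def⟩ : ∃ c2 : ℝ, c2 = (1 - 2*a - a^2)/4 := ⟨_, rfl⟩
  have hc1 : 0 < c1 := by rw [hc1_def]; linarith
  have hc2 : 0 < c2 := by rw [hc2_def]; linarith
  obtain ⟨W, hWn⟩ : ∃ W : ℕ → ℝ, ∀ n, W n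
      = ‖x (n+1) - z‖^2 + 2*lam*⟪F z, x n - z⟫ + a*‖x (n+1) - y n‖^2 :=
    ⟨_, fun n => rfl⟩
  have hWnonneg : ∀ n, 0 ≤ W n := by
    intro n
    have h1 : 0 ≤ 2*lam*⟪F z, x n - z⟫ := mul_nonneg (by linarith) (hA n)
    have h2 := sq_nonneg ‖x (n+1) - z‖
    have h3 := mul_nonneg ha0.le (sq_nonneg ‖x (n+1) - y n‖)
    rw [hWn]
    linarith
  -- The key one-step Lyapunov inequality
  have key : ∀ n, W (n+1) + c1*‖x (n+2) - y (n+1)‖^2 + c2*‖x (n+1) - x n‖^2 ≤ W n := by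
    intro n
    have hy1 : y (n+1) = (2:ℝ) • x (n+1) - x n := hyrec n
    -- E1
    have e1 : ‖x (n+2) - z‖^2 = ‖x (n+1) - z‖^2 + ‖x (n+2) - x (n+1)‖^2
        + 2*⟪x (n+2) - x (n+1), x (n+1) - z⟫ := prg_three_point _ _ _
    -- E2 : from projection characterization at z
    have e2 : ‖x (n+2) - x (n+1)‖^2 + ⟪x (n+2) - x (n+1), x (n+1) - z⟫
        + lam * ⟪F (y (n+1)), x (n+2) - z⟫ ≤ 0 := by
      have h := hchar (n+1) z hzC
      have hv : x (n+2) - (x (n+1) - lam • F (y (n+1)))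
          = (x (n+2) - x (n+1)) + lam • F (y (n+1)) := by abel
      have hzz : z - x (n+2) = -(x (n+2) - z) := by abel
      rw [hv, hzz, inner_add_left, real_inner_smul_left, inner_neg_right, inner_neg_right,
        prg_inner_split (x (n+2) - x (n+1)) (x (n+2)) (x (n+1)) z,
        real_inner_self_eq_norm_sq] at h
      linarith
    -- E3 split of f1 inner
    have e3 : ⟪F (y (n+1)), x (n+2) - z⟫
        = ⟪F (y (n+1)), x (n+2) - y (n+1)⟫ + ⟪F (y (n+1)), y (n+1) - z⟫ :=
      prg_inner_split _ _ _ _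
    -- E4 monotonicity
    have e4 : ⟪F z, y (n+1) - z⟫ ≤ ⟪F (y (n+1)), y (n+1) - z⟫ := by
      have h := hmono (y (n+1)) z
      rw [inner_sub_left] at h
      linarith
    -- E5
    have e5 : ⟪F z, y (n+1) - z⟫ = 2*⟪F z, x (n+1) - z⟫ - ⟪F z, x n - z⟫ := by
      have hv : y (n+1) - z = ((x (n+1) - z) + (x (n+1) - z)) - (x n - z) := by
        rw [hy1, two_smul]; abel
      rw [hv, inner_sub_right, inner_add_right]; ring
    -- E6
    have hxy : x (n+2) - y (n+1) = (x (n+2) - x (n+1)) - (x (n+1) - x n) := by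
      rw [hy1, two_smul]; abel
    have e6 : ⟪F (y (n+1)), x (n+2) - y (n+1)⟫
        = ⟪F (y (n+1)) - F (y n), x (n+2) - y (n+1)⟫
          + ⟪F (y n), x (n+2) - x (n+1)⟫ - ⟪F (y n), x (n+1) - x n⟫ := by
      rw [inner_sub_left]
      have h7 : ⟪F (y n), x (n+2) - y (n+1)⟫
          = ⟪F (y n), x (n+2) - x (n+1)⟫ - ⟪F (y n), x (n+1) - x n⟫ := by
        rw [hxy, inner_sub_right]
      linarith [h7]
    -- E7 : projection char of x(n+1) tested at x(n+2)
    have e7 : -⟪x (n+1) - x n, x (n+2) - x (n+1)⟫ ≤ lam * ⟪F (y n), x (n+2) - x (n+1)⟫ := by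
      have h := hchar n (x (n+2)) (hxC (n+2))
      have hv : x (n+1) - (x n - lam • F (y n)) = (x (n+1) - x n) + lam • F (y n) := by abel
      rw [hv, inner_add_left, real_inner_smul_left] at h
      linarith
    -- E8 : projection char of x(n+1) tested at x n
    have e8 : lam * ⟪F (y n), x (n+1) - x n⟫ ≤ -‖x (n+1) - x n‖^2 := by
      have h := hchar n (x n) (hxC n)
      have hv : x (n+1) - (x n - lam • F (y n)) = (x (n+1) - x n) + lam • F (y n) := by abel
      have hzz : x n - x (n+1) = -(x (n+1) - x n) := by abel
      rw [hv, hzz, inner_add_left, real_inner_smul_left, inner_neg_right, inner_neg_right,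
        real_inner_self_eq_norm_sq] at h
      linarith
    -- E9 : identity for ⟪r1, r0⟫
    have e9 : ‖x (n+2) - y (n+1)‖^2 = ‖x (n+2) - x (n+1)‖^2
        - 2*⟪x (n+2) - x (n+1), x (n+1) - x n⟫ + ‖x (n+1) - x n‖^2 := by
      rw [hxy, norm_sub_sq_real]
    -- E10 : Lipschitz bound
    have hyy : y (n+1) - y n = (x (n+1) - x n) + (x (n+1) - y n) := by
      rw [hy1, two_smul]; abel
    have hynorm : ‖y (n+1) - y n‖ ≤ ‖x (n+1) - x n‖ + ‖x (n+1) - y n‖ := by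
      rw [hyy]; exact norm_add_le _ _
    have e10 : -(L * (‖x (n+1) - x n‖ + ‖x (n+1) - y n‖) * ‖x (n+2) - y (n+1)‖)
        ≤ ⟪F (y (n+1)) - F (y n), x (n+2) - y (n+1)⟫ := by
      have hcs := real_inner_le_norm (F (y n) - F (y (n+1))) (x (n+2) - y (n+1))
      have hneg : F (y n) - F (y (n+1)) = -(F (y (n+1)) - F (y n)) := by abel
      rw [hneg, inner_neg_left, norm_neg] at hcs
      have hlipb : ‖F (y (n+1)) - F (y n)‖ ≤ L * (‖x (n+1) - x n‖ + ‖x (n+1) - y n‖) := by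
        refine (hlip _ _).trans ?_
        exact mul_le_mul_of_nonneg_left hynorm hL.le
      nlinarith [norm_nonneg (x (n+2) - y (n+1)), norm_nonneg (F (y (n+1)) - F (y n))]
    -- step 3 : lower bound on lam * ⟪f1, x(n+2) - y(n+1)⟫
    have step3 : lam * ⟪F (y (n+1)), x (n+2) - y (n+1)⟫
        ≥ -(a*‖x (n+1) - x n‖*‖x (n+2) - y (n+1)‖) - a*‖x (n+1) - y n‖*‖x (n+2) - y (n+1)‖
          + (‖x (n+2) - y (n+1)‖^2 - ‖x (n+2) - x (n+1)‖^2 - ‖x (n+1) - x n‖^2)/2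
          + ‖x (n+1) - x n‖^2 := by
      have e10lam : -(a*‖x (n+1) - x n‖*‖x (n+2) - y (n+1)‖)
            - a*‖x (n+1) - y n‖*‖x (n+2) - y (n+1)‖
          ≤ lam * ⟪F (y (n+1)) - F (y n), x (n+2) - y (n+1)⟫ := by
        have h := mul_le_mul_of_nonneg_left e10 hlam0.le
        calc -(a*‖x (n+1) - x n‖*‖x (n+2) - y (n+1)‖)
              - a*‖x (n+1) - y n‖*‖x (n+2) - y (n+1)‖
            = lam * (-(L * (‖x (n+1) - x n‖ + ‖x (n+1) - y n‖) * ‖x (n+2) - y (n+1)‖)) := by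
              rw [ha_def]; ring
          _ ≤ lam * ⟪F (y (n+1)) - F (y n), x (n+2) - y (n+1)⟫ := h
      have e7' : -((‖x (n+2) - x (n+1)‖^2 + ‖x (n+1) - x n‖^2 - ‖x (n+2) - y (n+1)‖^2)/2)
          ≤ lam * ⟪F (y n), x (n+2) - x (n+1)⟫ := by
        have hcomm : ⟪x (n+1) - x n, x (n+2) - x (n+1)⟫
            = ⟪x (n+2) - x (n+1), x (n+1) - x n⟫ := real_inner_comm _ _
        linarith [e7, e9]
      have e6lam : lam * ⟪F (y (n+1)), x (n+2) - y (n+1)⟫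
          = lam * ⟪F (y (n+1)) - F (y n), x (n+2) - y (n+1)⟫
            + lam * ⟪F (y n), x (n+2) - x (n+1)⟫ - lam * ⟪F (y n), x (n+1) - x n⟫ := by
        rw [e6]; ring
      rw [e6lam]
      linarith [e8]
    -- step 2 : lower bound on lam * ⟪f1, x(n+2) - z⟫
    have step2 : lam * ⟪F (y (n+1)), x (n+2) - z⟫
        ≥ lam * ⟪F (y (n+1)), x (n+2) - y (n+1)⟫
          + 2*lam*⟪F z, x (n+1) - z⟫ - lam*⟪F z, x n - z⟫ := by
      have e4lam : lam * ⟪F z, y (n+1) - z⟫ ≤ lam * ⟪F (y (n+1)), y (n+1) - z⟫ :=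
        mul_le_mul_of_nonneg_left e4 hlam0.le
      have e5lam : lam * ⟪F z, y (n+1) - z⟫
          = 2*lam*⟪F z, x (n+1) - z⟫ - lam*⟪F z, x n - z⟫ := by rw [e5]; ring
      have e3lam : lam * ⟪F (y (n+1)), x (n+2) - z⟫
          = lam * ⟪F (y (n+1)), x (n+2) - y (n+1)⟫ + lam * ⟪F (y (n+1)), y (n+1) - z⟫ := by
        rw [e3]; ring
      linarith
    -- step 1
    have step1 : ‖x (n+2) - z‖^2 ≤ ‖x (n+1) - z‖^2 - ‖x (n+2) - x (n+1)‖^2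
        - 2*(lam * ⟪F (y (n+1)), x (n+2) - z⟫) := by
      linarith [e1, e2]
    -- final assembly
    have hamgm := prg_amgm a ‖x (n+2) - y (n+1)‖ ‖x (n+1) - y n‖ ‖x (n+1) - x n‖
      ha0 ha1 (norm_nonneg _) (norm_nonneg _) (norm_nonneg _)
    have hA1 : 0 ≤ 2*lam*⟪F z, x (n+1) - z⟫ := mul_nonneg (by linarith) (hA (n+1))
    have hWsucc : W (n+1) = ‖x (n+2) - z‖^2 + 2*lam*⟪F z, x (n+1) - z⟫
        + a*‖x (n+2) - y (n+1)‖^2 := by rw [hWn]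
    rw [hWsucc, hWn n, hc1_def, hc2_def]
    linarith [step1, step2, step3, hamgm, hA1]
  -- consequences
  have Wmono : ∀ n, W (n+1) ≤ W n := by
    intro n
    have h1 := mul_nonneg hc1.le (sq_nonneg ‖x (n+2) - y (n+1)‖)
    have h2 := mul_nonneg hc2.le (sq_nonneg ‖x (n+1) - x n‖)
    linarith [key n]
  have WleW0 : ∀ n, W n ≤ W 0 := by
    intro n
    induction n with
    | zero => exact le_refl _
    | succ k ih => exact (Wmono k).trans ih
  -- summability machinery (used for both limits)
  have hsumle : ∀ N, ∑ k ∈ Finset.range N,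
      (c1*‖x (k+2) - y (k+1)‖^2 + c2*‖x (k+1) - x k‖^2) ≤ W 0 := by
    intro N
    have h1 : ∀ k ∈ Finset.range N,
        c1*‖x (k+2) - y (k+1)‖^2 + c2*‖x (k+1) - x k‖^2 ≤ W k - W (k+1) := by
      intro k _
      linarith [key k]
    calc ∑ k ∈ Finset.range N, (c1*‖x (k+2) - y (k+1)‖^2 + c2*‖x (k+1) - x k‖^2)
        ≤ ∑ k ∈ Finset.range N, (W k - W (k+1)) := Finset.sum_le_sum h1
      _ = W 0 - W N := Finset.sum_range_sub' W N
      _ ≤ W 0 := by linarith [hWnonneg N]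
  have hterm_nonneg : ∀ k : ℕ, 0 ≤ c1*‖x (k+2) - y (k+1)‖^2 + c2*‖x (k+1) - x k‖^2 := by
    intro k
    have h1 := mul_nonneg hc1.le (sq_nonneg ‖x (k+2) - y (k+1)‖)
    have h2 := mul_nonneg hc2.le (sq_nonneg ‖x (k+1) - x k‖)
    linarith
  have hsummable : Summable (fun k => c1*‖x (k+2) - y (k+1)‖^2 + c2*‖x (k+1) - x k‖^2) :=
    summable_of_sum_range_le hterm_nonneg hsumle
  have htend := hsummable.tendsto_atTop_zero
  refine ⟨?_, ?_, ?_⟩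
  · -- boundedness
    apply (Metric.isBounded_closedBall
      (x := z) (r := max ‖x 0 - z‖ (Real.sqrt (W 0)))).subset
    rintro _ ⟨m, rfl⟩
    rw [Metric.mem_closedBall, dist_eq_norm]
    cases m with
    | zero => exact le_max_left _ _
    | succ k =>
      refine le_trans ?_ (le_max_right _ _)
      have h1 : ‖x (k+1) - z‖^2 ≤ W k := by
        have h2 : 0 ≤ 2*lam*⟪F z, x k - z⟫ := mul_nonneg (by linarith) (hA k)
        have h3 := mul_nonneg ha0.le (sq_nonneg ‖x (k+1) - y k‖)
        rw [hWn]
        linarith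
      have h4 : ‖x (k+1) - z‖^2 ≤ W 0 := h1.trans (WleW0 k)
      calc ‖x (k+1) - z‖ = Real.sqrt (‖x (k+1) - z‖^2) := (Real.sqrt_sq (norm_nonneg _)).symm
        _ ≤ Real.sqrt (W 0) := Real.sqrt_le_sqrt h4
  · -- goal 2 : ‖x (n+1) - x n‖ → 0
    have h2 : Filter.Tendsto (fun n => c2*‖x (n+1) - x n‖^2) Filter.atTop (nhds 0) := by
      refine squeeze_zero (fun n => mul_nonneg hc2.le (sq_nonneg _)) (fun n => ?_) htend
      linarith [mul_nonneg hc1.le (sq_nonneg ‖x (n+2) - y (n+1)‖)]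
    have h3 : Filter.Tendsto (fun n => ‖x (n+1) - x n‖^2) Filter.atTop (nhds 0) := by
      have h4 := h2.const_mul c2⁻¹
      simp only [← mul_assoc, inv_mul_cancel₀ hc2.ne', one_mul, mul_zero] at h4
      exact h4
    have h5 := h3.sqrt
    rw [Real.sqrt_zero] at h5
    exact h5.congr (fun n => Real.sqrt_sq (norm_nonneg _))
  · -- goal 3 : ‖x (n+1) - y n‖ → 0
    have h2 : Filter.Tendsto (fun n => c1*‖x (n+2) - y (n+1)‖^2) Filter.atTop (nhds 0) := by
      refine squeeze_zero (fun n => mul_nonneg hc1.le (sq_nonneg _)) (fun n => ?_) htend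
      linarith [mul_nonneg hc2.le (sq_nonneg ‖x (n+1) - x n‖)]
    have h3 : Filter.Tendsto (fun n => ‖x (n+2) - y (n+1)‖^2) Filter.atTop (nhds 0) := by
      have h4 := h2.const_mul c1⁻¹
      simp only [← mul_assoc, inv_mul_cancel₀ hc1.ne', one_mul, mul_zero] at h4
      exact h4
    have h5 := h3.sqrt
    rw [Real.sqrt_zero] at h5
    have h6 : Filter.Tendsto (fun n : ℕ => ‖x (n+2) - y (n+1)‖) Filter.atTop (nhds 0) :=
      h5.congr (fun n => Real.sqrt_sq (norm_nonneg _))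
    exact (Filter.tendsto_add_atTop_iff_nat 1).mp h6
end

section
/- Let H be a real Hilbert space, C ⊆ H a nonempty closed convex set, F : H → H monotone and Lipschitz-continuous with constant L > 0, and λ > 0. Let (x_k) and (y_k) be sequences with x_{k+1} = P_C(x_k − λ F(y_k)) for all k, and suppose there is a subsequence of indices (n_i) and a point x* ∈ H such that x_{n_i} converges weakly to x*, ‖x_{n_i+1} − x_{n_i}‖ → 0, and ‖y_{n_i} − x_{n_i+1}‖ → 0 as i → ∞. Then x* ∈ C and ⟨F(x*), x − x*⟩ ≥ 0 for all x ∈ C, i.e., x* is a solution of the variational inequality. -/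
open RealInnerProductSpace

/-- Weak cluster points of the iterates are solutions of the variational
inequality. -/
theorem weak_cluster_point_is_solution
    {H : Type*} [NormedAddCommGroup H] [InnerProductSpace ℝ H] [CompleteSpace H]
    (C : Set H) (hC : C.Nonempty) (hCclosed : IsClosed C) (hCconv : Convex ℝ C)
    (P : H → H)
    (hPmem : ∀ u : H, P u ∈ C)
    (hPchar : ∀ u : H, ∀ y ∈ C, 0 ≤ ⟪P u - u, y - P u⟫)
    (F : H → H)
    (hmono : ∀ x y : H, 0 ≤ ⟪F x - F y, x - y⟫)
    (L : ℝ) (hL : 0 < L)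
    (hlip : ∀ x y : H, ‖F x - F y‖ ≤ L * ‖x - y‖)
    (lam : ℝ) (hlam : 0 < lam)
    (x y : ℕ → H)
    (hxrec : ∀ k : ℕ, x (k + 1) = P (x k - lam • F (y k)))
    (n : ℕ → ℕ) (hmonoidx : StrictMono n)
    (xstar : H)
    (hweak : ∀ f : H →L[ℝ] ℝ,
      Filter.Tendsto (fun i : ℕ => f (x (n i))) Filter.atTop (nhds (f xstar)))
    (hdiff1 : Filter.Tendsto (fun i : ℕ => ‖x (n i + 1) - x (n i)‖)
      Filter.atTop (nhds 0))
    (hdiff2 : Filter.Tendsto (fun i : ℕ => ‖y (n i) - x (n i + 1)‖)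
      Filter.atTop (nhds 0)) :
    xstar ∈ C ∧ ∀ w ∈ C, 0 ≤ ⟪F xstar, w - xstar⟫ := by
  -- x (n i + 1) ∈ C
  have hxC : ∀ i : ℕ, x (n i + 1) ∈ C := fun i => by rw [hxrec]; exact hPmem _
  -- boundedness of (x (n i)) via Banach-Steinhaus
  obtain ⟨M, hM⟩ : ∃ M : ℝ, ∀ i, ‖x (n i)‖ ≤ M := by
    obtain ⟨M, hM⟩ := banach_steinhaus (g := fun i : ℕ => innerSL ℝ (x (n i)))
      (fun z => by
        obtain ⟨Cz, hCz⟩ := ((hweak (innerSL ℝ z)).norm).bddAbove_range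
        refine ⟨Cz, fun i => ?_⟩
        have := hCz (Set.mem_range_self i)
        simpa [innerSL_apply_apply, real_inner_comm] using this)
    exact ⟨M, fun i => by simpa [innerSL_apply_norm] using hM i⟩
  obtain ⟨D1, hD1'⟩ := hdiff1.bddAbove_range
  have hD1 : ∀ i, ‖x (n i + 1) - x (n i)‖ ≤ D1 := fun i => hD1' (Set.mem_range_self i)
  obtain ⟨D2, hD2'⟩ := hdiff2.bddAbove_range
  have hD2 : ∀ i, ‖y (n i) - x (n i + 1)‖ ≤ D2 := fun i => hD2' (Set.mem_range_self i)
  have hM1 : ∀ i, ‖x (n i + 1)‖ ≤ D1 + M := by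
    intro i
    calc ‖x (n i + 1)‖ = ‖(x (n i + 1) - x (n i)) + x (n i)‖ := by rw [sub_add_cancel]
      _ ≤ ‖x (n i + 1) - x (n i)‖ + ‖x (n i)‖ := norm_add_le _ _
      _ ≤ D1 + M := add_le_add (hD1 i) (hM i)
  have hMy : ∀ i, ‖y (n i)‖ ≤ D2 + (D1 + M) := by
    intro i
    calc ‖y (n i)‖ = ‖(y (n i) - x (n i + 1)) + x (n i + 1)‖ := by rw [sub_add_cancel]
      _ ≤ ‖y (n i) - x (n i + 1)‖ + ‖x (n i + 1)‖ := norm_add_le _ _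
      _ ≤ D2 + (D1 + M) := add_le_add (hD2 i) (hM1 i)
  -- Step 1: xstar ∈ C
  have hxstarC : xstar ∈ C := by
    set q := P xstar with hqdef
    have hs : ∀ i, (0:ℝ) ≤ ⟪q - xstar, x (n i + 1) - q⟫ := fun i =>
      hPchar xstar _ (hxC i)
    have h1 : Filter.Tendsto (fun i => ⟪q - xstar, x (n i + 1) - x (n i)⟫)
        Filter.atTop (nhds 0) := by
      refine squeeze_zero_norm (fun i => ?_) (by simpa using hdiff1.const_mul ‖q - xstar‖)
      rw [Real.norm_eq_abs]; exact abs_real_inner_le_norm _ _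
    have h2 : Filter.Tendsto (fun i => ⟪q - xstar, x (n i)⟫) Filter.atTop
        (nhds ⟪q - xstar, xstar⟫) := by
      simpa only [innerSL_apply_apply] using hweak (innerSL ℝ (q - xstar))
    have hlim : Filter.Tendsto (fun i => ⟪q - xstar, x (n i + 1) - q⟫) Filter.atTop
        (nhds (⟪q - xstar, xstar - q⟫)) := by
      have heq : ∀ i : ℕ, ⟪q - xstar, x (n i + 1) - q⟫ =
          ⟪q - xstar, x (n i + 1) - x (n i)⟫ + (⟪q - xstar, x (n i)⟫ - ⟪q - xstar, q⟫) := by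
        intro i; simp [inner_sub_right]; try ring
      have := h1.add (h2.sub_const ⟪q - xstar, q⟫)
      rw [show ⟪q - xstar, xstar - q⟫ = 0 + (⟪q - xstar, xstar⟫ - ⟪q - xstar, q⟫) by
        simp [inner_sub_right]]
      exact this.congr (fun i => (heq i).symm)
    have h0 : (0:ℝ) ≤ ⟪q - xstar, xstar - q⟫ := ge_of_tendsto' hlim hs
    have h0' : ⟪q - xstar, xstar - q⟫ = -‖q - xstar‖ ^ 2 := by
      rw [show xstar - q = -(q - xstar) by abel, inner_neg_right,
        real_inner_self_eq_norm_sq]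
    have hn : ‖q - xstar‖ = 0 := by nlinarith [norm_nonneg (q - xstar)]
    have : q = xstar := sub_eq_zero.mp (norm_eq_zero.mp hn)
    rw [← this, hqdef]; exact hPmem xstar
  refine ⟨hxstarC, ?_⟩
  -- Step 2: Minty-type inequality ∀ w ∈ C, 0 ≤ ⟪F w, w - xstar⟫
  have key : ∀ w ∈ C, (0:ℝ) ≤ ⟪F w, w - xstar⟫ := by
    intro w hw
    set K : ℝ := L * (D2 + (D1 + M) + ‖w‖) + ‖F w‖ with hKdef
    have hFy : ∀ i, ‖F (y (n i))‖ ≤ K := by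
      intro i
      calc ‖F (y (n i))‖ = ‖(F (y (n i)) - F w) + F w‖ := by rw [sub_add_cancel]
        _ ≤ ‖F (y (n i)) - F w‖ + ‖F w‖ := norm_add_le _ _
        _ ≤ L * ‖y (n i) - w‖ + ‖F w‖ := by linarith [hlip (y (n i)) w]
        _ ≤ L * (D2 + (D1 + M) + ‖w‖) + ‖F w‖ := by
            have : ‖y (n i) - w‖ ≤ D2 + (D1 + M) + ‖w‖ := by
              calc ‖y (n i) - w‖ ≤ ‖y (n i)‖ + ‖w‖ := norm_sub_le _ _
                _ ≤ D2 + (D1 + M) + ‖w‖ := by linarith [hMy i]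
            nlinarith
    -- the key inequality at index i
    have hS : ∀ i : ℕ, (0:ℝ) ≤ ⟪x (n i + 1) - x (n i), w - x (n i + 1)⟫
        + lam * ⟪F w, w - y (n i)⟫ + lam * ⟪F (y (n i)), y (n i) - x (n i + 1)⟫ := by
      intro i
      have hP0 : (0:ℝ) ≤ ⟪x (n i + 1) - (x (n i) - lam • F (y (n i))), w - x (n i + 1)⟫ := by
        rw [hxrec (n i)]; exact hPchar _ w hw
      have hexp : ⟪x (n i + 1) - (x (n i) - lam • F (y (n i))), w - x (n i + 1)⟫ =
          ⟪x (n i + 1) - x (n i), w - x (n i + 1)⟫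
          + lam * ⟪F (y (n i)), w - x (n i + 1)⟫ := by
        simp [inner_sub_left, inner_sub_right, real_inner_smul_left]; try ring
      have hdecomp : ⟪F (y (n i)), w - x (n i + 1)⟫ =
          ⟪F (y (n i)) - F w, w - y (n i)⟫ + ⟪F w, w - y (n i)⟫
          + ⟪F (y (n i)), y (n i) - x (n i + 1)⟫ := by
        simp [inner_sub_left, inner_sub_right]; try ring
      have hneg : ⟪F (y (n i)) - F w, w - y (n i)⟫ ≤ 0 := by
        have h := hmono w (y (n i))
        have : ⟪F (y (n i)) - F w, w - y (n i)⟫ = -⟪F w - F (y (n i)), w - y (n i)⟫ := by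
          simp [inner_sub_left]; try ring
        linarith
      rw [hexp, hdecomp] at hP0
      nlinarith [hP0, mul_nonpos_of_nonneg_of_nonpos hlam.le hneg]
    -- limits
    have hA : Filter.Tendsto (fun i => ⟪x (n i + 1) - x (n i), w - x (n i + 1)⟫)
        Filter.atTop (nhds 0) := by
      refine squeeze_zero_norm (fun i => ?_) (by simpa using hdiff1.mul_const (‖w‖ + (D1 + M)))
      rw [Real.norm_eq_abs]
      calc |⟪x (n i + 1) - x (n i), w - x (n i + 1)⟫|
          ≤ ‖x (n i + 1) - x (n i)‖ * ‖w - x (n i + 1)‖ := abs_real_inner_le_norm _ _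
        _ ≤ ‖x (n i + 1) - x (n i)‖ * (‖w‖ + (D1 + M)) := by
            have h1 : ‖w - x (n i + 1)‖ ≤ ‖w‖ + (D1 + M) := by
              calc ‖w - x (n i + 1)‖ ≤ ‖w‖ + ‖x (n i + 1)‖ := norm_sub_le _ _
                _ ≤ ‖w‖ + (D1 + M) := by linarith [hM1 i]
            exact mul_le_mul_of_nonneg_left h1 (norm_nonneg _)
    have hCterm : Filter.Tendsto (fun i => ⟪F (y (n i)), y (n i) - x (n i + 1)⟫)
        Filter.atTop (nhds 0) := by
      refine squeeze_zero_norm (fun i => ?_) (by simpa using hdiff2.const_mul K)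
      rw [Real.norm_eq_abs]
      calc |⟪F (y (n i)), y (n i) - x (n i + 1)⟫|
          ≤ ‖F (y (n i))‖ * ‖y (n i) - x (n i + 1)‖ := abs_real_inner_le_norm _ _
        _ ≤ K * ‖y (n i) - x (n i + 1)‖ :=
            mul_le_mul_of_nonneg_right (hFy i) (norm_nonneg _)
    have hB : Filter.Tendsto (fun i => ⟪F w, w - y (n i)⟫) Filter.atTop
        (nhds ⟪F w, w - xstar⟫) := by
      have hb1 : Filter.Tendsto (fun i => ⟪F w, x (n i)⟫) Filter.atTop
          (nhds ⟪F w, xstar⟫) := by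
        simpa only [innerSL_apply_apply] using hweak (innerSL ℝ (F w))
      have hb2 : Filter.Tendsto (fun i => ⟪F w, x (n i + 1) - x (n i)⟫)
          Filter.atTop (nhds 0) := by
        refine squeeze_zero_norm (fun i => ?_) (by simpa using hdiff1.const_mul ‖F w‖)
        rw [Real.norm_eq_abs]; exact abs_real_inner_le_norm _ _
      have hb3 : Filter.Tendsto (fun i => ⟪F w, y (n i) - x (n i + 1)⟫)
          Filter.atTop (nhds 0) := by
        refine squeeze_zero_norm (fun i => ?_) (by simpa using hdiff2.const_mul ‖F w‖)
        rw [Real.norm_eq_abs]; exact abs_real_inner_le_norm _ _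
      have heq : ∀ i : ℕ, ⟪F w, w - y (n i)⟫ =
          ⟪F w, w⟫ - ⟪F w, x (n i)⟫ - ⟪F w, x (n i + 1) - x (n i)⟫
          - ⟪F w, y (n i) - x (n i + 1)⟫ := by
        intro i; simp [inner_sub_right]; try ring
      have := (((tendsto_const_nhds (x := ⟪F w, w⟫)
        (f := Filter.atTop (α := ℕ))).sub hb1).sub hb2).sub hb3
      rw [show ⟪F w, w - xstar⟫ = ⟪F w, w⟫ - ⟪F w, xstar⟫ - 0 - 0 by
        simp [inner_sub_right]]
      exact this.congr (fun i => (heq i).symm)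
    have hlimS : Filter.Tendsto (fun i => ⟪x (n i + 1) - x (n i), w - x (n i + 1)⟫
        + lam * ⟪F w, w - y (n i)⟫ + lam * ⟪F (y (n i)), y (n i) - x (n i + 1)⟫)
        Filter.atTop (nhds (0 + lam * ⟪F w, w - xstar⟫ + lam * 0)) :=
      (hA.add (hB.const_mul lam)).add (hCterm.const_mul lam)
    have hge : (0:ℝ) ≤ 0 + lam * ⟪F w, w - xstar⟫ + lam * 0 := ge_of_tendsto' hlimS hS
    have : (0:ℝ) ≤ lam * ⟪F w, w - xstar⟫ := by linarith
    exact nonneg_of_mul_nonneg_right this hlam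
  -- Step 3: Minty trick
  intro w hw
  refine le_of_forall_pos_le_add fun ε hε => ?_
  set s : ℝ := ‖w - xstar‖ with hsdef
  have hDpos : (0:ℝ) < L * (s ^ 2 + 1) := by positivity
  set t : ℝ := min 1 (ε / (L * (s ^ 2 + 1))) with htdef
  have ht0 : 0 < t := lt_min one_pos (div_pos hε hDpos)
  have ht1 : t ≤ 1 := min_le_left _ _
  have htε : t ≤ ε / (L * (s ^ 2 + 1)) := min_le_right _ _
  have hwt : xstar + t • (w - xstar) ∈ C :=
    hCconv.add_smul_sub_mem hxstarC hw ⟨ht0.le, ht1⟩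
  set wt : H := xstar + t • (w - xstar) with hwtdef
  have h1 : (0:ℝ) ≤ ⟪F wt, wt - xstar⟫ := key wt hwt
  have h2 : ⟪F wt, wt - xstar⟫ = t * ⟪F wt, w - xstar⟫ := by
    rw [hwtdef, show xstar + t • (w - xstar) - xstar = t • (w - xstar) by abel,
      real_inner_smul_right]
  have h3 : (0:ℝ) ≤ ⟪F wt, w - xstar⟫ := by
    rw [h2] at h1
    exact nonneg_of_mul_nonneg_right h1 ht0
  have h4 : |⟪F wt - F xstar, w - xstar⟫| ≤ L * t * s ^ 2 := by
    calc |⟪F wt - F xstar, w - xstar⟫| ≤ ‖F wt - F xstar‖ * ‖w - xstar‖ :=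
        abs_real_inner_le_norm _ _
      _ ≤ (L * ‖wt - xstar‖) * s := by
          exact mul_le_mul_of_nonneg_right (hlip wt xstar) (norm_nonneg _)
      _ = L * t * s ^ 2 := by
          rw [show wt - xstar = t • (w - xstar) by rw [hwtdef]; abel, norm_smul,
            Real.norm_eq_abs, abs_of_pos ht0]
          ring
  have h5 : ⟪F xstar, w - xstar⟫ = ⟪F wt, w - xstar⟫ - ⟪F wt - F xstar, w - xstar⟫ := by
    simp [inner_sub_left]
  have h6 : L * t * s ^ 2 ≤ ε := by
    have h7 : t * (L * (s ^ 2 + 1)) ≤ ε := by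
      rw [← le_div_iff₀ hDpos]; exact htε
    nlinarith [sq_nonneg s, ht0.le, hL.le]
  have := abs_le.mp h4
  linarith
end

section
/- Assume F : H → H is monotone and Lipschitz-continuous with constant L > 0 and the solution set S of the variational inequality on C is nonempty. Let (x_n) and (y_n) be the sequences generated by the projected reflected gradient algorithm: x_0 = y_0 ∈ C, x_{n+1} = P_C(x_n − λ F(y_n)) and y_{n+1} = 2x_{n+1} − x_n, where λ ∈ (0, (√2 − 1)/L). Then (x_n) converges weakly to some point x* ∈ S. -/
/-!
Put `k = lam * L`. For a solution `z`, the projection inequalities of two consecutive steps,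
monotonicity of `F` and its Lipschitz bound give `V (n + 1) + d n ≤ V n` for
`V n = ‖x (n + 1) - z‖² + k ‖x (n + 1) - y n‖² + 2 lam ⟪F z, x n - z⟫`, where `d n` dominates
`‖x (n + 1) - x n‖²`, `‖x (n + 2) - y (n + 1)‖²` and `⟪F z, x (n + 1) - z⟫` because
`k² + 2k < 1`, i.e. `lam < (√2 - 1) / L`. So `‖x n - z‖` converges and the steps vanish; passing to
the limit in the projection inequality and applying Minty's lemma shows that every weak cluster
point solves the variational inequality, and Opial's argument gives weak convergence.
-/

open RealInnerProductSpace Filter Topology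

theorem tendsto_zero_of_tendsto_sq {α : Type*} {l : Filter α} {g : α → ℝ}
    (h : Tendsto (fun n => g n ^ 2) l (𝓝 0)) : Tendsto g l (𝓝 0) := by
  have := h.sqrt
  simp only [Real.sqrt_sq_eq_abs, Real.sqrt_zero] at this
  exact (tendsto_zero_iff_abs_tendsto_zero g).2 this

theorem tendsto_of_succ_add_le {V d : ℕ → ℝ} (hV : ∀ n, 0 ≤ V n) (hd : ∀ n, 0 ≤ d n)
    (h : ∀ n, V (n + 1) + d n ≤ V n) :
    (∃ l, Tendsto V atTop (𝓝 l)) ∧ Tendsto d atTop (𝓝 0) := by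
  have hanti : Antitone V := antitone_nat_of_succ_le fun n => by linarith [h n, hd n]
  have hlim : Tendsto V atTop (𝓝 (⨅ n, V n)) :=
    tendsto_atTop_ciInf hanti ⟨0, by rintro _ ⟨n, rfl⟩; exact hV n⟩
  refine ⟨⟨_, hlim⟩, squeeze_zero hd (fun n => ?_ : ∀ n, d n ≤ V n - V (n + 1)) ?_⟩
  · linarith [h n]
  · simpa using hlim.sub (hlim.comp (tendsto_add_atTop_nat 1))

theorem exists_norm_le_of_tendsto_norm_sub_sq {E : Type*} [SeminormedAddCommGroup E]
    {u : ℕ → E} {z : E} {l : ℝ}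
    (h : Tendsto (fun n => ‖u n - z‖ ^ 2) atTop (𝓝 l)) : ∃ R, ∀ n, ‖u n‖ ≤ R := by
  obtain ⟨B, hB⟩ := h.bddAbove_range
  refine ⟨‖z‖ + 1 + B, fun n => ?_⟩
  have hn : ‖u n - z‖ ^ 2 ≤ B := hB (Set.mem_range_self n)
  nlinarith [norm_le_insert' (u n) z, sq_nonneg (‖u n - z‖ - 1)]

section WeakConvergence

variable {E : Type*} [NormedAddCommGroup E] [NormedSpace ℝ E]

def WeakTendsto (u : ℕ → E) (p : E) : Prop :=
  ∀ f : E →L[ℝ] ℝ, Tendsto (fun n => f (u n)) atTop (𝓝 (f p))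

theorem WeakTendsto.comp {u : ℕ → E} {p : E} (h : WeakTendsto u p) {φ : ℕ → ℕ}
    (hφ : Tendsto φ atTop atTop) : WeakTendsto (u ∘ φ) p :=
  fun f => (h f).comp hφ

theorem WeakTendsto.congr_of_tendsto_norm_sub {u v : ℕ → E} {p : E} (h : WeakTendsto u p)
    (huv : Tendsto (fun n => ‖v n - u n‖) atTop (𝓝 0)) : WeakTendsto v p := by
  intro f
  have hf : Tendsto (fun n => f (v n - u n)) atTop (𝓝 0) :=
    squeeze_zero_norm (fun n => f.le_opNorm _) (by simpa using huv.const_mul ‖f‖)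
  simpa using (h f).add hf

theorem WeakTendsto.mem_of_convex_of_isClosed {C : Set E} {u : ℕ → E} {p : E}
    (h : WeakTendsto u p) (hconv : Convex ℝ C) (hclosed : IsClosed C) (hu : ∀ n, u n ∈ C) :
    p ∈ C := by
  by_contra hp
  obtain ⟨f, s, hfC, hfp⟩ := geometric_hahn_banach_closed_point hconv hclosed hp
  exact (le_of_tendsto (h f) (Eventually.of_forall fun n => (hfC _ (hu n)).le)).not_gt hfp

end WeakConvergence

section Hilbert

variable {H : Type*} [NormedAddCommGroup H] [InnerProductSpace ℝ H]

theorem WeakTendsto.tendsto_inner {u : ℕ → H} {p : H} (h : WeakTendsto u p) (v : H) :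
    Tendsto (fun n => ⟪v, u n⟫) atTop (𝓝 ⟪v, p⟫) :=
  h (innerSL ℝ v)

theorem weakTendsto_of_forall_inner [CompleteSpace H] {u : ℕ → H} {p : H}
    (h : ∀ v, Tendsto (fun n => ⟪u n, v⟫) atTop (𝓝 ⟪p, v⟫)) : WeakTendsto u p := by
  intro f
  set g := (InnerProductSpace.toDual ℝ H).symm f
  simpa only [real_inner_comm g, g, InnerProductSpace.toDual_symm_apply] using h g

/-- Sequential Banach–Alaoglu, applied in the separable closed span of the sequence. -/
theorem exists_weakTendsto_subseq [CompleteSpace H] {u : ℕ → H} {R : ℝ} (hu : ∀ n, ‖u n‖ ≤ R) :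
    ∃ φ : ℕ → ℕ, StrictMono φ ∧ ∃ p, WeakTendsto (u ∘ φ) p := by
  set K := (Submodule.span ℝ (Set.range u)).topologicalClosure
  have huK n : u n ∈ K := Submodule.le_topologicalClosure _ (Submodule.subset_span ⟨n, rfl⟩)
  have : CompleteSpace K := (Submodule.isClosed_topologicalClosure _).completeSpace_coe
  have : TopologicalSpace.SeparableSpace K := by
    have := (Set.countable_range u).isSeparable.span (R := ℝ) |>.closure
    rw [← Submodule.topologicalClosure_coe] at this
    exact this.separableSpace
  let ℓ n : WeakDual ℝ K := StrongDual.toWeakDual (InnerProductSpace.toDual ℝ K ⟨u n, huK n⟩)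
  have hℓ n : ℓ n ∈ WeakDual.toStrongDual ⁻¹' Metric.closedBall 0 R :=
    mem_closedBall_zero_iff.2 (((InnerProductSpace.toDual ℝ K).norm_map _).trans_le (hu n))
  obtain ⟨ℓ', -, φ, hφ, hlim⟩ := WeakDual.isSeqCompact_closedBall ℝ K 0 R hℓ
  refine ⟨φ, hφ, (InnerProductSpace.toDual ℝ K).symm (WeakDual.toStrongDual ℓ'),
    weakTendsto_of_forall_inner fun v => ?_⟩
  have := ((WeakDual.eval_continuous (K.orthogonalProjectionOnto v)).tendsto ℓ').comp hlim
  rw [← Submodule.inner_orthogonalProjectionOnto_eq_of_mem_left,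
    InnerProductSpace.toDual_symm_apply]
  simpa [ℓ, Function.comp_def] using this

/-- The Opial identity: `‖u n - q‖² - ‖u n - p‖² = 2 ⟪p - q, u n⟫ + ‖q‖² - ‖p‖²`. -/
theorem eq_of_weakTendsto_of_tendsto_norm_sub_sq {u : ℕ → H} {p q : H} {φ ψ : ℕ → ℕ}
    (hφ : Tendsto φ atTop atTop) (hψ : Tendsto ψ atTop atTop)
    (hp : WeakTendsto (u ∘ φ) p) (hq : WeakTendsto (u ∘ ψ) q) {lp lq : ℝ}
    (hlp : Tendsto (fun n => ‖u n - p‖ ^ 2) atTop (𝓝 lp))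
    (hlq : Tendsto (fun n => ‖u n - q‖ ^ 2) atTop (𝓝 lq)) : p = q := by
  have hinner : Tendsto (fun n => ⟪p - q, u n⟫) atTop
      (𝓝 ((lq - lp + (‖p‖ ^ 2 - ‖q‖ ^ 2)) / 2)) := by
    refine (((hlq.sub hlp).add_const (‖p‖ ^ 2 - ‖q‖ ^ 2)).div_const 2).congr fun n => ?_
    rw [norm_sub_sq_real, norm_sub_sq_real, inner_sub_left, real_inner_comm p, real_inner_comm q]
    ring
  have hpp := tendsto_nhds_unique (hinner.comp hφ) (hp.tendsto_inner (p - q))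
  have hqq := tendsto_nhds_unique (hinner.comp hψ) (hq.tendsto_inner (p - q))
  have h0 : ⟪p - q, p - q⟫ = 0 := by rw [inner_sub_right]; linarith
  exact sub_eq_zero.mp (inner_self_eq_zero.mp h0)

theorem exists_weakTendsto_of_opial [CompleteSpace H] {S : Set H} {u : ℕ → H} (hS : S.Nonempty)
    (hdist : ∀ z ∈ S, ∃ l, Tendsto (fun n => ‖u n - z‖ ^ 2) atTop (𝓝 l))
    (hclust : ∀ (φ : ℕ → ℕ) (p : H), Tendsto φ atTop atTop → WeakTendsto (u ∘ φ) p → p ∈ S) :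
    ∃ p ∈ S, WeakTendsto u p := by
  obtain ⟨z, hz⟩ := hS
  obtain ⟨l, hl⟩ := hdist z hz
  obtain ⟨R, hR⟩ := exists_norm_le_of_tendsto_norm_sub_sq hl
  obtain ⟨φ, hφ, p, hp⟩ := exists_weakTendsto_subseq hR
  have hpS := hclust φ p hφ.tendsto_atTop hp
  refine ⟨p, hpS, fun f => tendsto_of_subseq_tendsto fun ns hns => ?_⟩
  obtain ⟨θ, hθ, q, hq⟩ := exists_weakTendsto_subseq fun n => hR (ns n)
  have hnsθ := hns.comp hθ.tendsto_atTop
  have hqS := hclust (ns ∘ θ) q hnsθ hq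
  obtain ⟨lp, hlp⟩ := hdist p hpS
  obtain ⟨lq, hlq⟩ := hdist q hqS
  obtain rfl := eq_of_weakTendsto_of_tendsto_norm_sub_sq hφ.tendsto_atTop hnsθ hp hq hlp hlq
  exact ⟨θ, hq f⟩

def viSolutionSet (C : Set H) (F : H → H) : Set H :=
  {z | z ∈ C ∧ ∀ w ∈ C, 0 ≤ ⟪F z, w - z⟫}

theorem mem_viSolutionSet_of_minty {C : Set H} {F : H → H} (hC : Convex ℝ C)
    (hF : Continuous F) {p : H} (hp : p ∈ C) (h : ∀ w ∈ C, 0 ≤ ⟪F w, w - p⟫) :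
    p ∈ viSolutionSet C F := by
  refine ⟨hp, fun w hw => ?_⟩
  have hseg : ∀ t ∈ Set.Ioc (0 : ℝ) 1, 0 ≤ ⟪F (p + t • (w - p)), w - p⟫ := by
    rintro t ⟨ht0, ht1⟩
    have := h _ (hC.add_smul_sub_mem hp hw ⟨ht0.le, ht1⟩)
    rw [add_sub_cancel_left, real_inner_smul_right] at this
    exact nonneg_of_mul_nonneg_right this ht0
  have hlim : Tendsto (fun t : ℝ => ⟪F (p + t • (w - p)), w - p⟫) (𝓝[>] 0) (𝓝 ⟪F p, w - p⟫) := by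
    have hcont : Continuous fun t : ℝ => ⟪F (p + t • (w - p)), w - p⟫ := by fun_prop
    simpa using (hcont.tendsto 0).mono_left nhdsWithin_le_nhds
  exact ge_of_tendsto hlim (eventually_mem_set.2 (Ioc_mem_nhdsGT one_pos) |>.mono hseg)

theorem two_mul_inner_sub_sub (a b c : H) :
    2 * ⟪b - a, c - b⟫ = ‖a - c‖ ^ 2 - ‖b - c‖ ^ 2 - ‖b - a‖ ^ 2 := by
  rw [show a - c = (b - c) - (b - a) by abel, norm_sub_sq_real, ← neg_sub c b, inner_neg_left,
    real_inner_comm]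
  ring

/-- The step `x (n + 1) = P_C (x n - lam • F (y n))` is recorded through the variational
characterization of the metric projection. -/
structure IsPRGSequence (C : Set H) (F : H → H) (lam : ℝ) (x y : ℕ → H) : Prop where
  mem : ∀ n, x n ∈ C
  proj : ∀ n, ∀ w ∈ C, 0 ≤ ⟪x (n + 1) - x n, w - x (n + 1)⟫ + lam * ⟪F (y n), w - x (n + 1)⟫
  reflect : ∀ n, y (n + 1) = (2 : ℝ) • x (n + 1) - x n

namespace IsPRGSequence

variable {C : Set H} {F : H → H} {lam L : ℝ} {x y : ℕ → H}

theorem of_proj {P : H → H} (hPmem : ∀ u, P u ∈ C)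
    (hPchar : ∀ u, ∀ w ∈ C, 0 ≤ ⟪P u - u, w - P u⟫) (hx0 : x 0 ∈ C)
    (hxrec : ∀ n, x (n + 1) = P (x n - lam • F (y n)))
    (hyrec : ∀ n, y (n + 1) = (2 : ℝ) • x (n + 1) - x n) : IsPRGSequence C F lam x y where
  mem
    | 0 => hx0
    | n + 1 => hxrec n ▸ hPmem _
  proj n w hw := by
    have h := hPchar (x n - lam • F (y n)) w hw
    rwa [← hxrec n, sub_sub_eq_add_sub, add_sub_right_comm, inner_add_left,
      real_inner_smul_left] at h
  reflect := hyrec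

theorem descent_ineq (h : IsPRGSequence C F lam x y) (hlam : 0 ≤ lam) (hL : 0 ≤ L)
    (hmono : ∀ u v, 0 ≤ ⟪F u - F v, u - v⟫) (hlip : ∀ u v, ‖F u - F v‖ ≤ L * ‖u - v‖)
    {z : H} (hz : z ∈ C) (n : ℕ) :
    ‖x (n + 2) - z‖ ^ 2 + ‖x (n + 1) - x n‖ ^ 2 + ‖x (n + 2) - y (n + 1)‖ ^ 2
        + 4 * lam * ⟪F z, x (n + 1) - z⟫
      ≤ ‖x (n + 1) - z‖ ^ 2 + 2 * lam * ⟪F z, x n - z⟫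
        + 2 * (lam * L) * (‖x (n + 1) - x n‖ + ‖x (n + 1) - y n‖) * ‖x (n + 2) - y (n + 1)‖ := by
  have hy := h.reflect n
  have hpz := h.proj (n + 1) z hz
  have hp2 := h.proj n (x (n + 2)) (h.mem _)
  have hp0 := h.proj n (x n) (h.mem _)
  have h3pt := two_mul_inner_sub_sub (x (n + 1)) (x (n + 2)) z
  have hself : ⟪x (n + 1) - x n, x n - x (n + 1)⟫ = -‖x (n + 1) - x n‖ ^ 2 := by
    rw [show x n - x (n + 1) = -(x (n + 1) - x n) by abel, inner_neg_right,
      real_inner_self_eq_norm_sq]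
  have hpar : 2 * ⟪x (n + 1) - x n, x (n + 2) - x (n + 1)⟫ = ‖x (n + 1) - x n‖ ^ 2
      + ‖x (n + 2) - x (n + 1)‖ ^ 2 - ‖x (n + 2) - y (n + 1)‖ ^ 2 := by
    rw [hy, show x (n + 2) - ((2 : ℝ) • x (n + 1) - x n)
      = (x (n + 2) - x (n + 1)) - (x (n + 1) - x n) by module,
      norm_sub_sq_real (x (n + 2) - x (n + 1)), real_inner_comm (x (n + 1) - x n)]
    ring
  have hsplit : ⟪F (y (n + 1)), z - x (n + 2)⟫ = ⟪F (y (n + 1)), z - y (n + 1)⟫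
      + ⟪F (y (n + 1)) - F (y n), y (n + 1) - x (n + 2)⟫
      - ⟪F (y n), x (n + 2) - x (n + 1)⟫ - ⟪F (y n), x n - x (n + 1)⟫ := by
    rw [hy]
    simp only [inner_sub_left, inner_sub_right, real_inner_smul_right]
    ring
  have hmz : ⟪F (y (n + 1)), z - y (n + 1)⟫ ≤ ⟪F z, x n - z⟫ - 2 * ⟪F z, x (n + 1) - z⟫ := by
    have hm := hmono (y (n + 1)) z
    have e : ⟪F z, z - y (n + 1)⟫ = ⟪F z, x n - z⟫ - 2 * ⟪F z, x (n + 1) - z⟫ := by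
      rw [show z - y (n + 1) = (x n - z) - (2 : ℝ) • (x (n + 1) - z) by rw [hy]; module,
        inner_sub_right, real_inner_smul_right]
    rw [inner_sub_left, ← neg_sub z, inner_neg_right, inner_neg_right] at hm
    linarith
  have hlipy : ⟪F (y (n + 1)) - F (y n), y (n + 1) - x (n + 2)⟫
      ≤ L * ((‖x (n + 1) - x n‖ + ‖x (n + 1) - y n‖) * ‖x (n + 2) - y (n + 1)‖) := by
    have hyy : ‖y (n + 1) - y n‖ ≤ ‖x (n + 1) - x n‖ + ‖x (n + 1) - y n‖ := by
      rw [show y (n + 1) - y n = (x (n + 1) - x n) + (x (n + 1) - y n) by rw [hy]; module]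
      exact norm_add_le _ _
    calc ⟪F (y (n + 1)) - F (y n), y (n + 1) - x (n + 2)⟫
        ≤ ‖F (y (n + 1)) - F (y n)‖ * ‖x (n + 2) - y (n + 1)‖ := by
          rw [norm_sub_rev (x (n + 2))]; exact real_inner_le_norm _ _
      _ ≤ L * (‖x (n + 1) - x n‖ + ‖x (n + 1) - y n‖) * ‖x (n + 2) - y (n + 1)‖ := by
          gcongr
          exact (hlip _ _).trans (mul_le_mul_of_nonneg_left hyy hL)
      _ = _ := by ring
  have hlam2 : 0 ≤ 2 * lam := by positivity
  nlinarith [mul_le_mul_of_nonneg_left hmz hlam2, mul_le_mul_of_nonneg_left hlipy hlam2]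

theorem tendsto_of_mem_viSolutionSet (h : IsPRGSequence C F lam x y) (hlam : 0 ≤ lam)
    (hL : 0 ≤ L) (hk : (lam * L) ^ 2 + 2 * (lam * L) < 1)
    (hmono : ∀ u v, 0 ≤ ⟪F u - F v, u - v⟫) (hlip : ∀ u v, ‖F u - F v‖ ≤ L * ‖u - v‖)
    {z : H} (hz : z ∈ viSolutionSet C F) :
    (∃ l, Tendsto (fun n => ‖x n - z‖ ^ 2) atTop (𝓝 l)) ∧
      Tendsto (fun n => ‖x (n + 1) - x n‖) atTop (𝓝 0) ∧
      Tendsto (fun n => ‖x (n + 1) - y n‖) atTop (𝓝 0) := by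
  set k := lam * L
  set a := fun n => ‖x (n + 1) - x n‖
  set e := fun n => ‖x (n + 1) - y n‖
  set s := fun n => 2 * lam * ⟪F z, x n - z⟫
  have hs n : 0 ≤ s n := mul_nonneg (by positivity) (hz.2 _ (h.mem n))
  have hk0 : 0 ≤ k := mul_nonneg hlam hL
  set V := fun n => ‖x (n + 1) - z‖ ^ 2 + k * e n ^ 2 + s n
  set d := fun n => s (n + 1) + (a n - k * e (n + 1)) ^ 2 + (1 - 2 * k - k ^ 2) * e (n + 1) ^ 2
  have hstep n : V (n + 1) + d n ≤ V n := by
    have := h.descent_ineq hlam hL hmono hlip hz.1 n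
    nlinarith [mul_nonneg hk0 (sq_nonneg (e n - e (n + 1)))]
  have hc : 0 < 1 - 2 * k - k ^ 2 := by linarith
  have hd0 n : 0 ≤ (a n - k * e (n + 1)) ^ 2 := sq_nonneg _
  have he0 n : 0 ≤ (1 - 2 * k - k ^ 2) * e (n + 1) ^ 2 := by positivity
  obtain ⟨⟨l, hV⟩, hd⟩ := tendsto_of_succ_add_le
    (fun n => by have := hs n; positivity) (fun n => by linarith [hs (n + 1), hd0 n, he0 n]) hstep
  have he : Tendsto e atTop (𝓝 0) := by
    refine (tendsto_add_atTop_iff_nat 1).1 (tendsto_zero_of_tendsto_sq ?_)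
    have := (squeeze_zero he0 (fun n => by linarith [hs (n + 1), hd0 n]) hd).div_const
      (1 - 2 * k - k ^ 2)
    simpa [mul_div_cancel_left₀ _ hc.ne'] using this
  have hsl : Tendsto s atTop (𝓝 0) :=
    (tendsto_add_atTop_iff_nat 1).1 (squeeze_zero (fun n => hs (n + 1))
      (fun n => by linarith [hd0 n, he0 n]) hd)
  have ha : Tendsto a atTop (𝓝 0) := by
    have := tendsto_zero_of_tendsto_sq
      (squeeze_zero hd0 (fun n => by linarith [hs (n + 1), he0 n]) hd)
    simpa using this.add ((he.comp (tendsto_add_atTop_nat 1)).const_mul k)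
  refine ⟨⟨l, (tendsto_add_atTop_iff_nat 1).1 ?_⟩, ha, he⟩
  have hlim := (hV.sub ((he.pow 2).const_mul k)).sub hsl
  rw [zero_pow two_ne_zero, mul_zero, sub_zero, sub_zero] at hlim
  exact hlim.congr fun n => by simp only [V]; ring

theorem neg_le_inner_map_sub (h : IsPRGSequence C F lam x y) (hlam : 0 < lam) (hL : 0 ≤ L)
    (hmono : ∀ u v, 0 ≤ ⟪F u - F v, u - v⟫) (hlip : ∀ u v, ‖F u - F v‖ ≤ L * ‖u - v‖)
    {R : ℝ} (hR : ∀ n, ‖x n‖ ≤ R) {w : H} (hw : w ∈ C) (n : ℕ) :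
    -(‖x (n + 1) - x n‖ * (‖w‖ + R) / lam
        + L * (‖w‖ + R + ‖x (n + 1) - y n‖) * ‖x (n + 1) - y n‖) ≤ ⟪F w, w - x (n + 1)⟫ := by
  have hwx : ‖w - x (n + 1)‖ ≤ ‖w‖ + R := (norm_sub_le _ _).trans (by linarith [hR (n + 1)])
  have hwy : ‖w - y n‖ ≤ ‖w‖ + R + ‖x (n + 1) - y n‖ := by
    calc ‖w - y n‖ ≤ ‖w - x (n + 1)‖ + ‖x (n + 1) - y n‖ := norm_sub_le_norm_sub_add_norm_sub _ _ _
      _ ≤ _ := by linarith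
  have hstep : -(‖x (n + 1) - x n‖ * (‖w‖ + R) / lam) ≤ ⟪F (y n), w - x (n + 1)⟫ := by
    rw [← neg_div, div_le_iff₀' hlam]
    have := (real_inner_le_norm (x (n + 1) - x n) (w - x (n + 1))).trans
      (mul_le_mul_of_nonneg_left hwx (norm_nonneg _))
    linarith [h.proj n w hw]
  have hlipy : -(L * (‖w‖ + R + ‖x (n + 1) - y n‖) * ‖x (n + 1) - y n‖)
      ≤ ⟪F w - F (y n), y n - x (n + 1)⟫ := by
    have := (real_inner_le_norm (F w - F (y n)) (x (n + 1) - y n)).trans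
      (mul_le_mul_of_nonneg_right ((hlip _ _).trans (mul_le_mul_of_nonneg_left hwy hL))
        (norm_nonneg _))
    rw [show y n - x (n + 1) = -(x (n + 1) - y n) by abel, inner_neg_right]
    linarith
  have hsplit : ⟪F w, w - x (n + 1)⟫ = ⟪F (y n), w - x (n + 1)⟫ + ⟪F w - F (y n), w - y n⟫
      + ⟪F w - F (y n), y n - x (n + 1)⟫ := by
    simp only [inner_sub_left, inner_sub_right]; ring
  linarith [hmono w (y n)]

theorem mem_viSolutionSet_of_weakTendsto (h : IsPRGSequence C F lam x y) (hC : Convex ℝ C)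
    (hCclosed : IsClosed C) (hlam : 0 < lam) (hL : 0 ≤ L)
    (hmono : ∀ u v, 0 ≤ ⟪F u - F v, u - v⟫) (hlip : ∀ u v, ‖F u - F v‖ ≤ L * ‖u - v‖)
    {R : ℝ} (hR : ∀ n, ‖x n‖ ≤ R) (ha : Tendsto (fun n => ‖x (n + 1) - x n‖) atTop (𝓝 0))
    (he : Tendsto (fun n => ‖x (n + 1) - y n‖) atTop (𝓝 0)) {φ : ℕ → ℕ}
    (hφ : Tendsto φ atTop atTop) {p : H} (hp : WeakTendsto (x ∘ φ) p) :
    p ∈ viSolutionSet C F := by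
  have hF : Continuous F :=
    (LipschitzWith.of_dist_le_mul (K := L.toNNReal) fun u v => by
      simpa [dist_eq_norm, Real.coe_toNNReal _ hL] using hlip u v).continuous
  refine mem_viSolutionSet_of_minty hC hF (hp.mem_of_convex_of_isClosed hC hCclosed
    fun n => h.mem _) fun w hw => ?_
  have hp' : WeakTendsto (fun j => x (φ j + 1)) p :=
    hp.congr_of_tendsto_norm_sub (ha.comp hφ)
  have hβ : Tendsto (fun n => ‖x (n + 1) - x n‖ * (‖w‖ + R) / lam
      + L * (‖w‖ + R + ‖x (n + 1) - y n‖) * ‖x (n + 1) - y n‖) atTop (𝓝 0) := by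
    simpa using ((ha.mul_const _).div_const lam).add
      (((he.const_add (‖w‖ + R)).const_mul L).mul he)
  have hlim : Tendsto (fun j => ⟪F w, w - x (φ j + 1)⟫) atTop (𝓝 ⟪F w, w - p⟫) := by
    simpa only [inner_sub_right] using tendsto_const_nhds.sub (hp'.tendsto_inner (F w))
  exact le_of_tendsto_of_tendsto (by simpa using (hβ.comp hφ).neg) hlim
    (Eventually.of_forall fun j => h.neg_le_inner_map_sub hlam hL hmono hlip hR hw (φ j))

end IsPRGSequence

end Hilbert

theorem weak_convergence_of_prg_general
    {H : Type*} [NormedAddCommGroup H] [InnerProductSpace ℝ H] [CompleteSpace H]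
    (C : Set H) (hCclosed : IsClosed C) (hCconv : Convex ℝ C)
    (P : H → H)
    (hPmem : ∀ u : H, P u ∈ C)
    (hPchar : ∀ u : H, ∀ y ∈ C, 0 ≤ ⟪P u - u, y - P u⟫)
    (F : H → H)
    (hmono : ∀ x y : H, 0 ≤ ⟪F x - F y, x - y⟫)
    (L : ℝ) (hL : 0 < L)
    (hlip : ∀ x y : H, ‖F x - F y‖ ≤ L * ‖x - y‖)
    (hS : ∃ z ∈ C, ∀ w ∈ C, 0 ≤ ⟪F z, w - z⟫)
    (lam : ℝ) (hlam : lam ∈ Set.Ioo (0 : ℝ) ((Real.sqrt 2 - 1) / L))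
    (x y : ℕ → H)
    (hx0 : x 0 ∈ C)
    (hxrec : ∀ n : ℕ, x (n + 1) = P (x n - lam • F (y n)))
    (hyrec : ∀ n : ℕ, y (n + 1) = (2 : ℝ) • x (n + 1) - x n) :
    ∃ xstar : H, xstar ∈ C ∧ (∀ w ∈ C, 0 ≤ ⟪F xstar, w - xstar⟫) ∧
      ∀ f : H →L[ℝ] ℝ,
        Filter.Tendsto (fun n : ℕ => f (x n)) Filter.atTop (nhds (f xstar)) := by
  obtain ⟨hlam0, hlamL⟩ := hlam
  have hk : (lam * L) ^ 2 + 2 * (lam * L) < 1 := by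
    have h1 : lam * L + 1 < √2 := by linarith [(lt_div_iff₀ hL).1 hlamL]
    nlinarith [(Real.lt_sqrt (by positivity)).1 h1]
  have hrun : IsPRGSequence C F lam x y := .of_proj hPmem hPchar hx0 hxrec hyrec
  have hfejer {z : H} (hz : z ∈ viSolutionSet C F) :=
    hrun.tendsto_of_mem_viSolutionSet hlam0.le hL.le hk hmono hlip hz
  obtain ⟨z, hz⟩ := hS
  obtain ⟨⟨l, hl⟩, ha, he⟩ := hfejer hz
  obtain ⟨R, hR⟩ := exists_norm_le_of_tendsto_norm_sub_sq hl
  obtain ⟨p, hpS, hp⟩ := exists_weakTendsto_of_opial ⟨z, hz⟩ (fun _ hz => (hfejer hz).1)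
    fun _ _ hφ hp => hrun.mem_viSolutionSet_of_weakTendsto hCconv hCclosed hlam0 hL.le hmono
      hlip hR ha he hφ hp
  exact ⟨p, hpS.1, hpS.2, hp⟩

/-- Theorem 3.3: the projected reflected gradient algorithm converges weakly to a
solution of the variational inequality. -/
theorem weak_convergence_of_prg
    {H : Type*} [NormedAddCommGroup H] [InnerProductSpace ℝ H] [CompleteSpace H]
    (C : Set H) (hC : C.Nonempty) (hCclosed : IsClosed C) (hCconv : Convex ℝ C)
    (P : H → H)
    (hPmem : ∀ u : H, P u ∈ C)
    (hPchar : ∀ u : H, ∀ y ∈ C, 0 ≤ ⟪P u - u, y - P u⟫)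
    (F : H → H)
    (hmono : ∀ x y : H, 0 ≤ ⟪F x - F y, x - y⟫)
    (L : ℝ) (hL : 0 < L)
    (hlip : ∀ x y : H, ‖F x - F y‖ ≤ L * ‖x - y‖)
    (hS : ∃ z ∈ C, ∀ w ∈ C, 0 ≤ ⟪F z, w - z⟫)
    (lam : ℝ) (hlam : lam ∈ Set.Ioo (0 : ℝ) ((Real.sqrt 2 - 1) / L))
    (x y : ℕ → H)
    (hx0 : x 0 ∈ C) (hy0 : y 0 = x 0)
    (hxrec : ∀ n : ℕ, x (n + 1) = P (x n - lam • F (y n)))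
    (hyrec : ∀ n : ℕ, y (n + 1) = (2 : ℝ) • x (n + 1) - x n) :
    ∃ xstar : H, xstar ∈ C ∧ (∀ w ∈ C, 0 ≤ ⟪F xstar, w - xstar⟫) ∧
      ∀ f : H →L[ℝ] ℝ,
        Filter.Tendsto (fun n : ℕ => f (x n)) Filter.atTop (nhds (f xstar)) :=
  weak_convergence_of_prg_general C hCclosed hCconv P hPmem hPchar F hmono L hL hlip hS lam hlam x y
    hx0 hxrec hyrec
end

section
/- Assume F : H → H is strongly monotone with modulus m > 0 and Lipschitz-continuous with constant L > 0, let z be the (unique) solution of the variational inequality on C, and let (x_n), (y_n) be generated by x_0 = y_0 ∈ C, x_{n+1} = P_C(x_n − λ F(y_n)), y_{n+1} = 2x_{n+1} − x_n with λ ∈ (0, (√2 − 1)/L). Then for every m₁ ∈ (0, m] and every n ≥ 1: ‖x_{n+1} − z‖² + (1 − √2 λL) ‖x_{n+1} − y_n‖² + 4λ ⟨F(z), x_n − z⟩ ≤ (1 − 4λ m₁) ‖x_n − z‖² + 2λ m₁ ‖x_{n−1} − z‖² + max{λL/(1 − √2 λL), 1/2} · ( (1 − √2 λL) ‖x_n −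 y_{n−1}‖² + 4λ ⟨F(z), x_{n−1} − z⟩ ). -/
/-!
Write `a, b, c` for `x (n+1), x n, x (n-1)`, so that `y n = 2 • b - c`. The obtuse-angle
inequality of the projection, tested at `z` for the step producing `a` and at `a` and `c` for the
step producing `b`, bounds `‖a - z‖² + ‖a - y n‖² + ‖b - c‖²` by
`‖b - z‖² - 2λ ⟪F (y n) - F (y (n-1)), a - y n⟫ - 2λ ⟪F (y n), y n - z⟫`.
Strong monotonicity handles the last term, via `‖y n - z‖² = 2‖b - z‖² - ‖c - z‖² + 2‖b - c‖²`;
the Lipschitz bound and two Young inequalities absorb the cross term into `‖a - y n‖²`,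
`‖b - c‖²` and `‖b - y (n-1)‖²`, and `λ L < √2 - 1` leaves the coefficient `1 - √2 λ L > 0`
on `‖a - y n‖²`.
-/

open RealInnerProductSpace

theorem two_mul_add_mul_le_of_lt_sqrt_two_sub_one {t p q r : ℝ} (ht : 0 ≤ t)
    (ht' : t < √2 - 1) :
    2 * t * (p + q) * r ≤ √2 * t * r ^ 2 + p ^ 2 + t * q ^ 2 := by
  nlinarith [sq_nonneg (t * r - p), mul_nonneg ht (sq_nonneg (q - r)),
    mul_nonneg (mul_nonneg ht (sub_nonneg.2 ht'.le)) (sq_nonneg r)]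

section InnerProductSpace

variable {H : Type*} [NormedAddCommGroup H] [InnerProductSpace ℝ H]

theorem norm_sub_sq_le_of_inner_nonneg {a b g z : H} (h : 0 ≤ ⟪a - b + g, z - a⟫) :
    ‖a - z‖ ^ 2 ≤ ‖b - z‖ ^ 2 - ‖a - b‖ ^ 2 - 2 * ⟪g, a - z⟫ := by
  have hexpand := norm_add_sq_real (b - a) (a - z)
  rw [show b - a + (a - z) = b - z by abel, norm_sub_rev b a, ← neg_sub a b,
    inner_neg_left] at hexpand
  rw [inner_add_left, ← neg_sub a z, inner_neg_right, inner_neg_right] at h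
  linarith

theorem le_inner_sub_two_smul_sub {a b c g : H}
    (ha : 0 ≤ ⟪b - c + g, a - b⟫) (hc : 0 ≤ ⟪b - c + g, c - b⟫) :
    ‖b - c‖ ^ 2 - ⟪b - c, a - b⟫ ≤ ⟪g, a - ((2 : ℝ) • b - c)⟫ := by
  rw [show a - ((2 : ℝ) • b - c) = (a - b) + (c - b) by module, inner_add_right]
  rw [inner_add_left] at ha hc
  rw [← neg_sub b c, inner_neg_right, inner_neg_right, real_inner_self_eq_norm_sq] at hc
  rw [← neg_sub b c, inner_neg_right]
  linarith

theorem norm_sub_two_smul_sub_sq (a b c : H) :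
    ‖a - ((2 : ℝ) • b - c)‖ ^ 2 = ‖a - b‖ ^ 2 - 2 * ⟪a - b, b - c⟫ + ‖b - c‖ ^ 2 := by
  rw [show a - ((2 : ℝ) • b - c) = (a - b) - (b - c) by module, norm_sub_sq_real]

theorem norm_two_smul_sub_sub_sq (b c z : H) :
    ‖(2 : ℝ) • b - c - z‖ ^ 2 = 2 * ‖b - z‖ ^ 2 - ‖c - z‖ ^ 2 + 2 * ‖b - c‖ ^ 2 := by
  have hbc := norm_sub_sq_real (b - z) (c - z)
  rw [show b - z - (c - z) = b - c by abel] at hbc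
  rw [show (2 : ℝ) • b - c - z = (2 : ℝ) • (b - z) - (c - z) by module, norm_sub_sq_real,
    norm_smul, real_inner_smul_left, hbc, Real.norm_two]
  ring

theorem projected_reflected_gradient_step_le (F : H → H) {m₁ L lam : ℝ} (hL : 0 ≤ L)
    (hlam : 0 ≤ lam) {a b c w w₀ z : H} (hw : w = (2 : ℝ) • b - c)
    (hproj_a : 0 ≤ ⟪a - b + lam • F w, z - a⟫)
    (hproj_b_a : 0 ≤ ⟪b - c + lam • F w₀, a - b⟫)
    (hproj_b_c : 0 ≤ ⟪b - c + lam • F w₀, c - b⟫)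
    (hstrong : m₁ * ‖w - z‖ ^ 2 ≤ ⟪F w - F z, w - z⟫)
    (hlip : ‖F w - F w₀‖ ≤ L * ‖w - w₀‖) :
    ‖a - z‖ ^ 2 + ‖a - w‖ ^ 2 + ‖b - c‖ ^ 2 + 2 * lam * m₁ * ‖w - z‖ ^ 2
        + 4 * lam * ⟪F z, b - z⟫ ≤
      ‖b - z‖ ^ 2 + 2 * lam * L * (‖b - c‖ + ‖b - w₀‖) * ‖a - w‖
        + 2 * lam * ⟪F z, c - z⟫ := by
  have hdescent := norm_sub_sq_le_of_inner_nonneg hproj_a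
  rw [real_inner_smul_left] at hdescent
  have hsplit : ⟪F w, a - z⟫ = ⟪F w - F w₀, a - w⟫ + ⟪F w₀, a - w⟫
      + ⟪F w - F z, w - z⟫ + ⟪F z, w - z⟫ := by
    rw [show a - z = (a - w) + (w - z) by abel, inner_add_right, inner_sub_left, inner_sub_left]
    ring
  have hreflect := le_inner_sub_two_smul_sub hproj_b_a hproj_b_c
  rw [← hw, real_inner_smul_left] at hreflect
  have hcross : -(L * (‖b - c‖ + ‖b - w₀‖) * ‖a - w‖) ≤ ⟪F w - F w₀, a - w⟫ := by
    have hw₀ : ‖w - w₀‖ ≤ ‖b - c‖ + ‖b - w₀‖ := by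
      rw [show w - w₀ = (b - c) + (b - w₀) by rw [hw]; module]
      exact norm_add_le _ _
    calc -(L * (‖b - c‖ + ‖b - w₀‖) * ‖a - w‖)
        ≤ -(‖F w - F w₀‖ * ‖a - w‖) := by
          gcongr
          exact hlip.trans (mul_le_mul_of_nonneg_left hw₀ hL)
      _ ≤ ⟪F w - F w₀, a - w⟫ := neg_le_of_abs_le (abs_real_inner_le_norm _ _)
  have hFz : ⟪F z, w - z⟫ = 2 * ⟪F z, b - z⟫ - ⟪F z, c - z⟫ := by
    rw [show w - z = (2 : ℝ) • (b - z) - (c - z) by rw [hw]; module, inner_sub_right,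
      real_inner_smul_right]
  have hnorm_aw := norm_sub_two_smul_sub_sq a b c
  rw [← hw, real_inner_comm] at hnorm_aw
  have h2lam : 0 ≤ 2 * lam := by positivity
  rw [hsplit, hFz] at hdescent
  linarith [mul_le_mul_of_nonneg_left hcross h2lam, mul_le_mul_of_nonneg_left hstrong h2lam]

theorem projected_reflected_gradient_step_estimate (F : H → H) {m₁ L lam : ℝ} (hm₁ : 0 ≤ m₁)
    (hL : 0 ≤ L) (hlam : 0 ≤ lam) (hlamL : lam * L < √2 - 1) {a b c w w₀ z : H} (hw : w = (2 : ℝ) • b - c)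
    (hproj_a : 0 ≤ ⟪a - b + lam • F w, z - a⟫)
    (hproj_b_a : 0 ≤ ⟪b - c + lam • F w₀, a - b⟫)
    (hproj_b_c : 0 ≤ ⟪b - c + lam • F w₀, c - b⟫)
    (hstrong : m₁ * ‖w - z‖ ^ 2 ≤ ⟪F w - F z, w - z⟫)
    (hlip : ‖F w - F w₀‖ ≤ L * ‖w - w₀‖) (hc : 0 ≤ ⟪F z, c - z⟫) :
    ‖a - z‖ ^ 2 + (1 - √2 * lam * L) * ‖a - w‖ ^ 2 + 4 * lam * ⟪F z, b - z⟫ ≤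
      (1 - 4 * lam * m₁) * ‖b - z‖ ^ 2 + 2 * lam * m₁ * ‖c - z‖ ^ 2
        + max (lam * L / (1 - √2 * lam * L)) (1 / 2) *
          ((1 - √2 * lam * L) * ‖b - w₀‖ ^ 2 + 4 * lam * ⟪F z, c - z⟫) := by
  have hstep := projected_reflected_gradient_step_le F hL hlam hw hproj_a hproj_b_a hproj_b_c
    hstrong hlip
  have hyoung := two_mul_add_mul_le_of_lt_sqrt_two_sub_one (p := ‖b - c‖) (q := ‖b - w₀‖)
    (r := ‖a - w‖) (mul_nonneg hlam hL) hlamL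
  have hwz : 2 * lam * m₁ * ‖w - z‖ ^ 2
      = 2 * lam * m₁ * (2 * ‖b - z‖ ^ 2 - ‖c - z‖ ^ 2 + 2 * ‖b - c‖ ^ 2) := by
    rw [hw, norm_two_smul_sub_sub_sq]
  have hs : 0 < 1 - √2 * lam * L := by
    nlinarith [Real.sq_sqrt (zero_le_two : (0 : ℝ) ≤ 2), Real.sqrt_nonneg 2]
  set M := max (lam * L / (1 - √2 * lam * L)) (1 / 2)
  have hM_lip : lam * L ≤ M * (1 - √2 * lam * L) := (div_le_iff₀ hs).1 (le_max_left _ _)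
  have hM_half : 1 / 2 ≤ M := le_max_right _ _
  linarith [mul_le_mul_of_nonneg_right hM_lip (sq_nonneg ‖b - w₀‖),
    mul_nonneg (sub_nonneg.2 hM_half) (mul_nonneg hlam hc),
    mul_nonneg (mul_nonneg hlam hm₁) (sq_nonneg ‖b - c‖)]

end InnerProductSpace

theorem strong_monotone_key_inequality_general
    {H : Type*} [NormedAddCommGroup H] [InnerProductSpace ℝ H]
    (C : Set H)
    (P : H → H)
    (hPmem : ∀ u : H, P u ∈ C)
    (hPchar : ∀ u : H, ∀ y ∈ C, 0 ≤ ⟪P u - u, y - P u⟫)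
    (F : H → H)
    (m : ℝ)
    (hstrong : ∀ x y : H, m * ‖x - y‖ ^ 2 ≤ ⟪F x - F y, x - y⟫)
    (L : ℝ) (hL : 0 < L)
    (hlip : ∀ x y : H, ‖F x - F y‖ ≤ L * ‖x - y‖)
    (z : H) (hzC : z ∈ C) (hzS : ∀ w ∈ C, 0 ≤ ⟪F z, w - z⟫)
    (lam : ℝ) (hlam : lam ∈ Set.Ioo (0 : ℝ) ((Real.sqrt 2 - 1) / L))
    (x y : ℕ → H)
    (hx0 : x 0 ∈ C)
    (hxrec : ∀ n : ℕ, x (n + 1) = P (x n - lam • F (y n)))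
    (hyrec : ∀ n : ℕ, y (n + 1) = (2 : ℝ) • x (n + 1) - x n)
    (m₁ : ℝ) (hm₁ : m₁ ∈ Set.Ioc (0 : ℝ) m)
    (n : ℕ) (hn : 1 ≤ n) :
    ‖x (n + 1) - z‖ ^ 2 + (1 - Real.sqrt 2 * lam * L) * ‖x (n + 1) - y n‖ ^ 2
        + 4 * lam * ⟪F z, x n - z⟫ ≤
      (1 - 4 * lam * m₁) * ‖x n - z‖ ^ 2 + 2 * lam * m₁ * ‖x (n - 1) - z‖ ^ 2
        + max (lam * L / (1 - Real.sqrt 2 * lam * L)) (1 / 2) *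
          ((1 - Real.sqrt 2 * lam * L) * ‖x n - y (n - 1)‖ ^ 2
            + 4 * lam * ⟪F z, x (n - 1) - z⟫) := by
  obtain ⟨k, rfl⟩ : ∃ k, n = k + 1 := Nat.exists_eq_add_of_le' hn
  rw [Nat.add_sub_cancel]
  have hxC : ∀ j, x j ∈ C
    | 0 => hx0
    | j + 1 => hxrec j ▸ hPmem _
  have hproj : ∀ j, ∀ v ∈ C, 0 ≤ ⟪x (j + 1) - x j + lam • F (y j), v - x (j + 1)⟫ := by
    intro j v hv
    simpa only [← hxrec j, ← sub_add] using hPchar (x j - lam • F (y j)) v hv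
  have hstrong₁ : m₁ * ‖y (k + 1) - z‖ ^ 2 ≤ ⟪F (y (k + 1)) - F z, y (k + 1) - z⟫ :=
    (mul_le_mul_of_nonneg_right hm₁.2 (sq_nonneg _)).trans (hstrong _ _)
  exact projected_reflected_gradient_step_estimate F hm₁.1.le hL.le hlam.1.le
    ((lt_div_iff₀ hL).1 hlam.2) (hyrec k) (hproj (k + 1) z hzC) (hproj k _ (hxC _))
    (hproj k _ (hxC k)) hstrong₁ (hlip _ _) (hzS _ (hxC k))

/-- Inequality (3.9): the key estimate under strong monotonicity. -/
theorem strong_monotone_key_inequality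
    {H : Type*} [NormedAddCommGroup H] [InnerProductSpace ℝ H] [CompleteSpace H]
    (C : Set H) (hC : C.Nonempty) (hCclosed : IsClosed C) (hCconv : Convex ℝ C)
    (P : H → H)
    (hPmem : ∀ u : H, P u ∈ C)
    (hPchar : ∀ u : H, ∀ y ∈ C, 0 ≤ ⟪P u - u, y - P u⟫)
    (F : H → H)
    (m : ℝ) (hm : 0 < m)
    (hstrong : ∀ x y : H, m * ‖x - y‖ ^ 2 ≤ ⟪F x - F y, x - y⟫)
    (L : ℝ) (hL : 0 < L)
    (hlip : ∀ x y : H, ‖F x - F y‖ ≤ L * ‖x - y‖)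
    (z : H) (hzC : z ∈ C) (hzS : ∀ w ∈ C, 0 ≤ ⟪F z, w - z⟫)
    (lam : ℝ) (hlam : lam ∈ Set.Ioo (0 : ℝ) ((Real.sqrt 2 - 1) / L))
    (x y : ℕ → H)
    (hx0 : x 0 ∈ C) (hy0 : y 0 = x 0)
    (hxrec : ∀ n : ℕ, x (n + 1) = P (x n - lam • F (y n)))
    (hyrec : ∀ n : ℕ, y (n + 1) = (2 : ℝ) • x (n + 1) - x n)
    (m₁ : ℝ) (hm₁ : m₁ ∈ Set.Ioc (0 : ℝ) m)
    (n : ℕ) (hn : 1 ≤ n) :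
    ‖x (n + 1) - z‖ ^ 2 + (1 - Real.sqrt 2 * lam * L) * ‖x (n + 1) - y n‖ ^ 2
        + 4 * lam * ⟪F z, x n - z⟫ ≤
      (1 - 4 * lam * m₁) * ‖x n - z‖ ^ 2 + 2 * lam * m₁ * ‖x (n - 1) - z‖ ^ 2
        + max (lam * L / (1 - Real.sqrt 2 * lam * L)) (1 / 2) *
          ((1 - Real.sqrt 2 * lam * L) * ‖x n - y (n - 1)‖ ^ 2
            + 4 * lam * ⟪F z, x (n - 1) - z⟫) :=
  strong_monotone_key_inequality_general C P hPmem hPchar F m hstrong L hL hlip z hzC hzS lam hlam x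
    y hx0 hxrec hyrec m₁ hm₁ n hn
end

section
/- Assume F : H → H is strongly monotone with modulus m > 0 and Lipschitz-continuous with constant L > 0, and the variational inequality on C has a solution z. Let (x_n), (y_n) be generated by x_0 = y_0 ∈ C, x_{n+1} = P_C(x_n − λ F(y_n)), y_{n+1} = 2x_{n+1} − x_n with λ ∈ (0, (√2 − 1)/L). Then (x_n) converges to z at least R-linearly: there exist γ ∈ (0,1) and M > 0 such that ‖x_n − z‖² ≤ γ^n · M for all n > 0. -/
open RealInnerProductSpace

private lemma prg_sq_triangle (a b c : ℝ) (ha : 0 ≤ a) (h : a ≤ b + c) :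
    a ^ 2 ≤ 2 * b ^ 2 + 2 * c ^ 2 := by
  nlinarith [sq_nonneg (b - c), mul_nonneg (by linarith : (0:ℝ) ≤ b + c - a) (by linarith : (0:ℝ) ≤ b + c + a)]

private lemma prg_lip (lam L v w t u q u' : ℝ) (hlam : 0 < lam) (hL : 0 < L)
    (h1 : -(w * u) ≤ v) (h2 : w ≤ L * t) (h3 : t ≤ q + u') (hu : 0 ≤ u) :
    -(2 * (lam * L) * u * (q + u')) ≤ 2 * lam * v := by
  have c1 : w * u ≤ (L * t) * u := mul_le_mul_of_nonneg_right h2 hu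
  have c2 : (L * t) * u ≤ (L * (q + u')) * u :=
    mul_le_mul_of_nonneg_right (mul_le_mul_of_nonneg_left h3 hL.le) hu
  have c3 : -((L * (q + u')) * u) ≤ v := by linarith
  have c4 := mul_le_mul_of_nonneg_left c3 (by positivity : (0:ℝ) ≤ 2 * lam)
  nlinarith [c4]

private lemma prg_sm (lam m ν ip t s q : ℝ) (hlam : 0 < lam) (hm : 0 < m) (hν : 0 < ν)
    (hνlm : ν ≤ lam * m) (hsm : m * t ^ 2 ≤ ip) (hb : s ≤ t + q) (hs : 0 ≤ s) :
    ν * s ^ 2 - 2 * ν * q ^ 2 ≤ 2 * lam * ip := by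
  have h1 : s ^ 2 ≤ 2 * t ^ 2 + 2 * q ^ 2 := prg_sq_triangle s t q hs hb
  have h2 : ν * s ^ 2 ≤ ν * (2 * t ^ 2 + 2 * q ^ 2) := mul_le_mul_of_nonneg_left h1 hν.le
  have h3 : ν * (2 * t ^ 2) ≤ (lam * m) * (2 * t ^ 2) :=
    mul_le_mul_of_nonneg_right hνlm (by positivity)
  have h4 : lam * (m * t ^ 2) ≤ lam * ip := mul_le_mul_of_nonneg_left hsm hlam.le
  nlinarith [h2, h3, h4]

private lemma prg_constants (ε μ : ℝ) (hε0 : 0 < ε) (hεkey : ε ^ 2 + 2 * ε < 1) (hμ : 0 < μ) :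
    ∃ α ν γ : ℝ, 0 < α ∧ 0 < ν ∧ ν ≤ μ ∧ 0 < γ ∧ γ < 1 ∧ 1 - ν ≤ γ ∧ 1/2 ≤ γ ∧
      ∀ q u u' : ℝ, 2 * ε * u * (q + u') ≤
        (1 - 2 * ν) * q ^ 2 + (1 - α) * u ^ 2 + γ * α * u' ^ 2 := by
  obtain ⟨α, hαdef⟩ : ∃ α : ℝ, α = (1 - ε ^ 2) / 2 := ⟨_, rfl⟩
  have hα0 : 0 < α := by rw [hαdef]; nlinarith
  have hαlt : α < 1 := by rw [hαdef]; nlinarith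
  obtain ⟨Δ, hΔdef⟩ : ∃ Δ : ℝ, Δ = α ^ 2 - ε ^ 2 := ⟨_, rfl⟩
  have hΔ0 : 0 < Δ := by
    have hαε : ε < α := by rw [hαdef]; nlinarith
    rw [hΔdef]; nlinarith
  obtain ⟨ν, hνdef⟩ : ∃ ν : ℝ,
      ν = min μ (min (1/4) (Δ / (8 * (α ^ 2 + α * ε ^ 2) + 1))) := ⟨_, rfl⟩
  have hden0 : 0 < 8 * (α ^ 2 + α * ε ^ 2) + 1 := by positivity
  have hν0 : 0 < ν := by
    rw [hνdef]
    exact lt_min hμ (lt_min (by norm_num) (by positivity))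
  have hν14 : ν ≤ 1/4 := by
    rw [hνdef]; exact le_trans (min_le_right _ _) (min_le_left _ _)
  have hνμ : ν ≤ μ := by rw [hνdef]; exact min_le_left _ _
  have hνΔ : 2 * ν * (α ^ 2 + α * ε ^ 2) ≤ Δ / 4 := by
    have h1 : ν ≤ Δ / (8 * (α ^ 2 + α * ε ^ 2) + 1) := by
      rw [hνdef]; exact le_trans (min_le_right _ _) (min_le_right _ _)
    have h2 : ν * (8 * (α ^ 2 + α * ε ^ 2) + 1) ≤ Δ := by
      rw [← le_div_iff₀ hden0]; exact h1
    nlinarith [hν0.le, sq_nonneg α, mul_nonneg hα0.le (sq_nonneg ε)]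
  obtain ⟨γ, hγdef⟩ : ∃ γ : ℝ,
      γ = max (max (1 - ν) (1/2)) (ε ^ 2 / (ε ^ 2 + Δ / 2)) := ⟨_, rfl⟩
  have hγ12 : (1:ℝ)/2 ≤ γ := by
    rw [hγdef]; exact le_trans (le_max_right _ _) (le_max_left _ _)
  have hγν : 1 - ν ≤ γ := by
    rw [hγdef]; exact le_trans (le_max_left _ _) (le_max_left _ _)
  have hγ0 : 0 < γ := lt_of_lt_of_le (by norm_num) hγ12
  have hγlt1 : γ < 1 := by
    have h2 : ε ^ 2 / (ε ^ 2 + Δ / 2) < 1 := by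
      rw [div_lt_one (by positivity)]; linarith
    rw [hγdef]
    exact max_lt (max_lt (by linarith) (by norm_num)) h2
  have hγε : γ * (ε ^ 2 + Δ / 2) ≥ ε ^ 2 := by
    have h1 : ε ^ 2 / (ε ^ 2 + Δ / 2) ≤ γ := by rw [hγdef]; exact le_max_right _ _
    have h2 : 0 < ε ^ 2 + Δ / 2 := by positivity
    calc ε ^ 2 = ε ^ 2 / (ε ^ 2 + Δ / 2) * (ε ^ 2 + Δ / 2) := by field_simp
      _ ≤ γ * (ε ^ 2 + Δ / 2) := mul_le_mul_of_nonneg_right h1 h2.le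
  refine ⟨α, ν, γ, hα0, hν0, hνμ, hγ0, hγlt1, hγν, hγ12, ?_⟩
  obtain ⟨D, hDdef⟩ : ∃ D : ℝ, D = 1 - 2 * ν := ⟨_, rfl⟩
  have hD12 : (1:ℝ)/2 ≤ D := by rw [hDdef]; linarith
  have hDpos : 0 < D := by linarith
  have hDle1 : D ≤ 1 := by rw [hDdef]; linarith
  obtain ⟨X, hXdef⟩ : ∃ X : ℝ, X = D * α - 2 * ν * ε ^ 2 := ⟨_, rfl⟩
  have hXα : X * α ≥ ε ^ 2 + Δ / 2 := by
    have h3 : X * α = α ^ 2 - 2 * ν * (α ^ 2 + α * ε ^ 2) := by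
      rw [hXdef, hDdef]; ring
    linarith [h3, hνΔ, hΔdef, hΔ0.le]
  have hXα0 : 0 < X * α := lt_of_lt_of_le (by positivity) hXα
  have hX0 : 0 < X := by
    rcases lt_or_ge 0 X with h | h
    · exact h
    · exfalso; nlinarith [mul_nonpos_of_nonpos_of_nonneg h hα0.le]
  have hXγα : X * (D * γ * α) ≥ (D * ε) ^ 2 := by
    have h1 : X * γ * α ≥ ε ^ 2 := by
      calc X * γ * α = γ * (X * α) := by ring
        _ ≥ γ * (ε ^ 2 + Δ / 2) := mul_le_mul_of_nonneg_left hXα hγ0.le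
        _ ≥ ε ^ 2 := hγε
    calc (D * ε) ^ 2 = D * (D * ε ^ 2) := by ring
      _ ≤ D * (X * γ * α) := by
          apply mul_le_mul_of_nonneg_left _ hDpos.le
          nlinarith [sq_nonneg ε]
      _ = X * (D * γ * α) := by ring
  intro q u u'
  have e2 : (0:ℝ) ≤ (X * u - D * ε * u') ^ 2 := sq_nonneg _
  have e1 : (0:ℝ) ≤ X * (D * q - ε * u) ^ 2 := by positivity
  have e3 : (0:ℝ) ≤ (X * (D * γ * α) - (D * ε) ^ 2) * u' ^ 2 :=
    mul_nonneg (by linarith [hXγα]) (sq_nonneg _)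
  have e4 : (1 - α) * D - ε ^ 2 - X = 0 := by
    rw [hXdef, hDdef, hαdef]; ring
  obtain ⟨E, hEdef⟩ : ∃ E : ℝ, E = D * q ^ 2 + (1 - α) * u ^ 2 + γ * α * u' ^ 2
      - 2 * ε * u * (q + u') := ⟨_, rfl⟩
  have key : 0 ≤ X * D * E := by
    have hid : X * D * E
        = X * (D * q - ε * u) ^ 2 + (X * u - D * ε * u') ^ 2
          + (X * (D * γ * α) - (D * ε) ^ 2) * u' ^ 2
          + X * ((1 - α) * D - ε ^ 2 - X) * u ^ 2 := by rw [hEdef]; ring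
    rw [hid, e4]
    simp only [mul_zero, zero_mul]
    linarith
  have hXD : 0 < X * D := mul_pos hX0 hDpos
  have h0 : X * D * 0 ≤ X * D * E := by rw [mul_zero]; exact key
  have hE : (0:ℝ) ≤ E := le_of_mul_le_mul_left h0 hXD
  rw [hEdef] at hE
  rw [hDdef] at hE
  linarith [hE]

set_option maxHeartbeats 2000000 in
/-- Theorem 3.4: under strong monotonicity the projected reflected gradient
algorithm converges at least R-linearly. -/
theorem rlinear_convergence_of_prg
    {H : Type*} [NormedAddCommGroup H] [InnerProductSpace ℝ H] [CompleteSpace H]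
    (C : Set H) (hC : C.Nonempty) (hCclosed : IsClosed C) (hCconv : Convex ℝ C)
    (P : H → H)
    (hPmem : ∀ u : H, P u ∈ C)
    (hPchar : ∀ u : H, ∀ y ∈ C, 0 ≤ ⟪P u - u, y - P u⟫)
    (F : H → H)
    (m : ℝ) (hm : 0 < m)
    (hstrong : ∀ x y : H, m * ‖x - y‖ ^ 2 ≤ ⟪F x - F y, x - y⟫)
    (L : ℝ) (hL : 0 < L)
    (hlip : ∀ x y : H, ‖F x - F y‖ ≤ L * ‖x - y‖)
    (z : H) (hzC : z ∈ C) (hzS : ∀ w ∈ C, 0 ≤ ⟪F z, w - z⟫)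
    (lam : ℝ) (hlam : lam ∈ Set.Ioo (0 : ℝ) ((Real.sqrt 2 - 1) / L))
    (x y : ℕ → H)
    (hx0 : x 0 ∈ C) (hy0 : y 0 = x 0)
    (hxrec : ∀ n : ℕ, x (n + 1) = P (x n - lam • F (y n)))
    (hyrec : ∀ n : ℕ, y (n + 1) = (2 : ℝ) • x (n + 1) - x n) :
    ∃ γ ∈ Set.Ioo (0 : ℝ) 1, ∃ M > (0 : ℝ),
      ∀ n : ℕ, 0 < n → ‖x n - z‖ ^ 2 ≤ γ ^ n * M := by
  obtain ⟨hlam0, hlam1⟩ := hlam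
  obtain ⟨ε, hεdef⟩ : ∃ ε : ℝ, ε = lam * L := ⟨_, rfl⟩
  have hε0 : 0 < ε := hεdef ▸ mul_pos hlam0 hL
  have hε1 : ε < Real.sqrt 2 - 1 := by
    rw [hεdef]
    calc lam * L < (Real.sqrt 2 - 1) / L * L := mul_lt_mul_of_pos_right hlam1 hL
      _ = Real.sqrt 2 - 1 := by field_simp
  have hεkey : ε ^ 2 + 2 * ε < 1 := by
    have hsq2 : Real.sqrt 2 ^ 2 = 2 := Real.sq_sqrt (by norm_num)
    have hsq2nn : (0:ℝ) ≤ Real.sqrt 2 := Real.sqrt_nonneg 2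
    nlinarith [hε0, hε1, hsq2, hsq2nn]
  obtain ⟨α, ν, γ, hα0, hν0, hνlm, hγ0, hγlt1, hγν, hγ12, hPSD⟩ :=
    prg_constants ε (lam * m) hε0 hεkey (mul_pos hlam0 hm)
  -- membership of the iterates
  have hxC : ∀ n : ℕ, x n ∈ C := by
    intro n
    cases n with
    | zero => exact hx0
    | succ k => rw [hxrec k]; exact hPmem _
  -- the linear functional values
  obtain ⟨S, hSdef⟩ : ∃ S : ℕ → ℝ, S = fun k => ⟪F z, x k - z⟫ := ⟨_, rfl⟩
  have hSnn : ∀ k, 0 ≤ S k := by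
    intro k; rw [hSdef]; exact hzS (x k) (hxC k)
  -- THE KEY ONE-STEP INEQUALITY
  have hKEY : ∀ n : ℕ,
      ‖x (n+2) - z‖ ^ 2 ≤ (1 - ν) * ‖x (n+1) - z‖ ^ 2
        - (1 - 2*ν) * ‖x (n+1) - x n‖ ^ 2 - ‖x (n+2) - y (n+1)‖ ^ 2
        + 2 * ε * ‖x (n+2) - y (n+1)‖ * (‖x (n+1) - x n‖ + ‖x (n+1) - y n‖)
        - 4 * lam * S (n+1) + 2 * lam * S n := by
    intro n
    have hY : y (n+1) = (2:ℝ) • x (n+1) - x n := hyrec n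
    -- (1) projection inequality at step n+1, tested at z
    have h1 : 0 ≤ ⟪x (n+2) - (x (n+1) - lam • F (y (n+1))), z - x (n+2)⟫ := by
      have := hPchar (x (n+1) - lam • F (y (n+1))) z hzC
      rwa [← hxrec (n+1)] at this
    have h1' : 0 ≤ ⟪x (n+2) - x (n+1), z - x (n+2)⟫ + lam * ⟪F (y (n+1)), z - x (n+2)⟫ := by
      have e : x (n+2) - (x (n+1) - lam • F (y (n+1)))
          = (x (n+2) - x (n+1)) + lam • F (y (n+1)) := by module
      rwa [e, inner_add_left, real_inner_smul_left] at h1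
    have hid1 : ‖x (n+1) - z‖ ^ 2 = ‖x (n+1) - x (n+2)‖ ^ 2
        + 2 * ⟪x (n+1) - x (n+2), x (n+2) - z⟫ + ‖x (n+2) - z‖ ^ 2 := by
      have e : x (n+1) - z = (x (n+1) - x (n+2)) + (x (n+2) - z) := by abel
      rw [e, norm_add_sq_real]
    have hsw1 : ⟪x (n+2) - x (n+1), z - x (n+2)⟫
        = ⟪x (n+1) - x (n+2), x (n+2) - z⟫ := by
      rw [show x (n+2) - x (n+1) = -(x (n+1) - x (n+2)) by abel,
        show z - x (n+2) = -(x (n+2) - z) by abel, inner_neg_neg]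
    have hsw2 : ⟪F (y (n+1)), z - x (n+2)⟫ = -⟪F (y (n+1)), x (n+2) - z⟫ := by
      rw [show z - x (n+2) = -(x (n+2) - z) by abel, inner_neg_right]
    have hmain1 : 2 * lam * ⟪F (y (n+1)), x (n+2) - z⟫
        ≤ ‖x (n+1) - z‖ ^ 2 - ‖x (n+1) - x (n+2)‖ ^ 2 - ‖x (n+2) - z‖ ^ 2 := by
      rw [hsw1, hsw2] at h1'
      nlinarith [h1', hid1]
    -- (2) projection inequality at step n, tested at x (n+2) and x n
    have h2 : 0 ≤ ⟪x (n+1) - (x n - lam • F (y n)), x (n+2) - x (n+1)⟫ := by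
      have := hPchar (x n - lam • F (y n)) (x (n+2)) (hxC (n+2))
      rwa [← hxrec n] at this
    have h2' : 0 ≤ ⟪x (n+1) - x n, x (n+2) - x (n+1)⟫
        + lam * ⟪F (y n), x (n+2) - x (n+1)⟫ := by
      have e : x (n+1) - (x n - lam • F (y n))
          = (x (n+1) - x n) + lam • F (y n) := by module
      rwa [e, inner_add_left, real_inner_smul_left] at h2
    have h3 : 0 ≤ ⟪x (n+1) - (x n - lam • F (y n)), x n - x (n+1)⟫ := by
      have := hPchar (x n - lam • F (y n)) (x n) (hxC n)
      rwa [← hxrec n] at this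
    have h3' : 0 ≤ -‖x (n+1) - x n‖ ^ 2 - lam * ⟪F (y n), x (n+1) - x n⟫ := by
      have e : x (n+1) - (x n - lam • F (y n))
          = (x (n+1) - x n) + lam • F (y n) := by module
      rw [e, inner_add_left, real_inner_smul_left] at h3
      simp only [show x n - x (n+1) = -(x (n+1) - x n) from by abel,
        inner_neg_right, real_inner_self_eq_norm_sq] at h3
      linarith [h3]
    have hsplit' : ⟪F (y n), x (n+2) - y (n+1)⟫
        = ⟪F (y n), x (n+2) - x (n+1)⟫ - ⟪F (y n), x (n+1) - x n⟫ := by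
      rw [← inner_sub_right]
      congr 1
      rw [hY]; module
    have hmain2 : 2 * ‖x (n+1) - x n‖ ^ 2 - 2 * ⟪x (n+1) - x n, x (n+2) - x (n+1)⟫
        ≤ 2 * lam * ⟪F (y n), x (n+2) - y (n+1)⟫ := by
      have e := hsplit'
      nlinarith [h2', h3', e]
    -- (3) Lipschitz bound
    have hYY' : ‖y (n+1) - y n‖ ≤ ‖x (n+1) - x n‖ + ‖x (n+1) - y n‖ := by
      have e : y (n+1) - y n = (x (n+1) - x n) + (x (n+1) - y n) := by
        rw [hY]; module
      rw [e]; exact norm_add_le _ _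
    have hcs : -(‖F (y (n+1)) - F (y n)‖ * ‖x (n+2) - y (n+1)‖)
        ≤ ⟪F (y (n+1)) - F (y n), x (n+2) - y (n+1)⟫ := by
      have h := abs_real_inner_le_norm (F (y (n+1)) - F (y n)) (x (n+2) - y (n+1))
      have h' := neg_abs_le ⟪F (y (n+1)) - F (y n), x (n+2) - y (n+1)⟫
      linarith
    have hmain3 : -(2 * ε * ‖x (n+2) - y (n+1)‖ * (‖x (n+1) - x n‖ + ‖x (n+1) - y n‖))
        ≤ 2 * lam * ⟪F (y (n+1)) - F (y n), x (n+2) - y (n+1)⟫ := by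
      have h := prg_lip lam L _ _ _ _ _ _ hlam0 hL hcs (hlip (y (n+1)) (y n)) hYY'
        (norm_nonneg _)
      rw [hεdef]
      linarith [h]
    -- (4) strong monotonicity bound
    have hbz : ‖x (n+1) - z‖ ≤ ‖y (n+1) - z‖ + ‖x (n+1) - x n‖ := by
      have e : x (n+1) - z = (y (n+1) - z) - (x (n+1) - x n) := by
        rw [hY]; module
      rw [e]; exact norm_sub_le _ _
    have hmain4 : ν * ‖x (n+1) - z‖ ^ 2 - 2 * ν * ‖x (n+1) - x n‖ ^ 2
        ≤ 2 * lam * ⟪F (y (n+1)) - F z, y (n+1) - z⟫ :=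
      prg_sm lam m ν _ _ _ _ hlam0 hm hν0 hνlm (hstrong (y (n+1)) z) hbz (norm_nonneg _)
    -- (5) the linear term
    have hSY : 2 * lam * ⟪F z, y (n+1) - z⟫ = 4 * lam * S (n+1) - 2 * lam * S n := by
      have e : y (n+1) - z = (2:ℝ) • (x (n+1) - z) - (x n - z) := by
        rw [hY]; module
      rw [e, inner_sub_right, real_inner_smul_right, hSdef]
      ring
    -- (6) decomposition of the main inner product
    have hdec : 2 * lam * ⟪F (y (n+1)), x (n+2) - z⟫
        = 2 * lam * ⟪F (y (n+1)) - F (y n), x (n+2) - y (n+1)⟫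
          + 2 * lam * ⟪F (y n), x (n+2) - y (n+1)⟫
          + 2 * lam * ⟪F (y (n+1)) - F z, y (n+1) - z⟫
          + 2 * lam * ⟪F z, y (n+1) - z⟫ := by
      have e1 : ⟪F (y (n+1)), x (n+2) - z⟫
          = ⟪F (y (n+1)), x (n+2) - y (n+1)⟫ + ⟪F (y (n+1)), y (n+1) - z⟫ := by
        rw [← inner_add_right]; congr 1; abel
      have e2 : ⟪F (y (n+1)), x (n+2) - y (n+1)⟫
          = ⟪F (y (n+1)) - F (y n), x (n+2) - y (n+1)⟫
            + ⟪F (y n), x (n+2) - y (n+1)⟫ := by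
        rw [inner_sub_left]; ring
      have e3 : ⟪F (y (n+1)), y (n+1) - z⟫
          = ⟪F (y (n+1)) - F z, y (n+1) - z⟫ + ⟪F z, y (n+1) - z⟫ := by
        rw [inner_sub_left]; ring
      rw [e1, e2, e3]; ring
    -- (7) norm identity for ‖x (n+2) - y (n+1)‖
    have hid2 : ‖x (n+2) - y (n+1)‖ ^ 2 = ‖x (n+2) - x (n+1)‖ ^ 2
        - 2 * ⟪x (n+2) - x (n+1), x (n+1) - x n⟫ + ‖x (n+1) - x n‖ ^ 2 := by
      have e : x (n+2) - y (n+1) = (x (n+2) - x (n+1)) - (x (n+1) - x n) := by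
        rw [hY]; module
      rw [e, norm_sub_sq_real]
    have hswn : ‖x (n+1) - x (n+2)‖ ^ 2 = ‖x (n+2) - x (n+1)‖ ^ 2 := by
      rw [norm_sub_rev]
    have hswi : ⟪x (n+1) - x n, x (n+2) - x (n+1)⟫
        = ⟪x (n+2) - x (n+1), x (n+1) - x n⟫ := real_inner_comm _ _
    -- assemble
    linarith [hmain1, hmain2, hmain3, hmain4, hSY, hdec, hid2, hswn, hswi]
  -- Lyapunov function
  obtain ⟨Ψ, hΨdef⟩ : ∃ Ψ : ℕ → ℝ, Ψ = fun k =>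
      ‖x (k+1) - z‖ ^ 2 + α * ‖x (k+1) - y k‖ ^ 2 + 4 * lam * S k := ⟨_, rfl⟩
  have hstep : ∀ n : ℕ, Ψ (n+1) ≤ γ * Ψ n := by
    intro n
    have hK := hKEY n
    have hP := hPSD (‖x (n+1) - x n‖) (‖x (n+2) - y (n+1)‖) (‖x (n+1) - y n‖)
    have hA : (1 - ν) * ‖x (n+1) - z‖ ^ 2 ≤ γ * ‖x (n+1) - z‖ ^ 2 :=
      mul_le_mul_of_nonneg_right hγν (sq_nonneg _)
    have hBS : 2 * lam * S n ≤ γ * (4 * lam * S n) := by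
      have h0 : 0 ≤ 4 * lam * S n := by
        have := hSnn n; positivity
      have := mul_le_mul_of_nonneg_right hγ12 h0
      linarith [this]
    rw [hΨdef]
    simp only
    linarith [hK, hP, hA, hBS]
  have hiter : ∀ k : ℕ, Ψ k ≤ γ ^ k * Ψ 0 := by
    intro k
    induction k with
    | zero => simp
    | succ j ih =>
      calc Ψ (j+1) ≤ γ * Ψ j := hstep j
        _ ≤ γ * (γ ^ j * Ψ 0) := mul_le_mul_of_nonneg_left ih hγ0.le
        _ = γ ^ (j+1) * Ψ 0 := by ring
  have hΨ0nn : 0 ≤ Ψ 0 := by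
    rw [hΨdef]
    simp only
    have h1 := hSnn 0
    positivity
  refine ⟨γ, ⟨hγ0, hγlt1⟩, Ψ 0 / γ + 1, by positivity, ?_⟩
  intro n hn
  obtain ⟨k, rfl⟩ : ∃ k, n = k + 1 := ⟨n - 1, by omega⟩
  have h1 : ‖x (k+1) - z‖ ^ 2 ≤ Ψ k := by
    rw [hΨdef]
    simp only
    have h2 := hSnn k
    have h3 : 0 ≤ α * ‖x (k+1) - y k‖ ^ 2 := by positivity
    have h4 : 0 ≤ 4 * lam * S k := by positivity
    linarith
  have h2 : Ψ k ≤ γ ^ k * Ψ 0 := hiter k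
  have h3 : γ ^ k * Ψ 0 ≤ γ ^ (k+1) * (Ψ 0 / γ + 1) := by
    have e : γ ^ (k+1) * (Ψ 0 / γ + 1) = γ ^ k * Ψ 0 + γ ^ (k+1) := by
      field_simp
      ring
    rw [e]
    have : 0 < γ ^ (k+1) := pow_pos hγ0 _
    linarith
  linarith
end

section
/- Let H be a real Hilbert space and F : H → H any map. Let α > 0, λ_n > 0, and x_{n−1}, x_n, x_{n+1}, y_{n−1}, y_n ∈ H with y_n = 2x_n − x_{n−1} and λ_n ‖F(y_n) − F(y_{n−1})‖ ≤ α ‖y_n − y_{n−1}‖. Then 2λ_n ⟨F(y_n) − F(y_{n−1}), y_n − x_{n+1}⟩ ≤ α(1+√2) ‖y_n − x_n‖² + α ‖x_n − y_{n−1}‖² + √2 α ‖x_{n+1} − y_n‖². -/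
open RealInnerProductSpace

/-- Estimate (4.7): the analogue of (3.5) with the stepsize condition
`λ_n ‖F y_n - F y_{n-1}‖ ≤ α ‖y_n - y_{n-1}‖`. -/
theorem stepsize_cross_estimate
    {H : Type*} [NormedAddCommGroup H] [InnerProductSpace ℝ H] [CompleteSpace H]
    (F : H → H) (α : ℝ) (hα : 0 < α)
    (lamn : ℝ) (hlamn : 0 < lamn)
    (xprev xn xnext yprev yn : H)
    (hyn : yn = (2 : ℝ) • xn - xprev)
    (hstep : lamn * ‖F yn - F yprev‖ ≤ α * ‖yn - yprev‖) :
    2 * lamn * ⟪F yn - F yprev, yn - xnext⟫ ≤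
      α * (1 + Real.sqrt 2) * ‖yn - xn‖ ^ 2
        + α * ‖xn - yprev‖ ^ 2
        + Real.sqrt 2 * α * ‖xnext - yn‖ ^ 2 := by
  set a := ‖yn - xn‖ with ha
  set b := ‖xn - yprev‖ with hb
  set c := ‖xnext - yn‖ with hc
  have hcauchy : ⟪F yn - F yprev, yn - xnext⟫ ≤ ‖F yn - F yprev‖ * ‖yn - xnext‖ :=
    real_inner_le_norm _ _
  have hrev : ‖yn - xnext‖ = c := norm_sub_rev _ _
  have htri : ‖yn - yprev‖ ≤ a + b := norm_sub_le_norm_sub_add_norm_sub yn xn yprev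
  have hcnn : 0 ≤ c := norm_nonneg _
  have hann : 0 ≤ a := norm_nonneg _
  have hbnn : 0 ≤ b := norm_nonneg _
  have h1 : 2 * lamn * ⟪F yn - F yprev, yn - xnext⟫ ≤ 2 * (α * (a + b)) * c := by
    calc 2 * lamn * ⟪F yn - F yprev, yn - xnext⟫
        ≤ 2 * lamn * (‖F yn - F yprev‖ * ‖yn - xnext‖) := by
          have := mul_le_mul_of_nonneg_left hcauchy (by positivity : (0:ℝ) ≤ 2 * lamn)
          linarith
      _ = 2 * (lamn * ‖F yn - F yprev‖) * c := by rw [hrev]; ring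
      _ ≤ 2 * (α * ‖yn - yprev‖) * c := by
          have := mul_le_mul_of_nonneg_right hstep hcnn
          nlinarith
      _ ≤ 2 * (α * (a + b)) * c := by
          have := mul_le_mul_of_nonneg_right
            (mul_le_mul_of_nonneg_left htri hα.le) hcnn
          nlinarith
  have hs2 : Real.sqrt 2 ^ 2 = 2 := Real.sq_sqrt (by norm_num)
  have hs2nn : 0 ≤ Real.sqrt 2 := Real.sqrt_nonneg 2
  have hpos : (0:ℝ) < 1 + Real.sqrt 2 := by positivity
  have e1 : 2 * α * a * c ≤ α * (1 + Real.sqrt 2) * a ^ 2 + (Real.sqrt 2 - 1) * α * c ^ 2 := by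
    have key : (1 + Real.sqrt 2) * (2 * α * a * c) ≤
        (1 + Real.sqrt 2) * (α * (1 + Real.sqrt 2) * a ^ 2 + (Real.sqrt 2 - 1) * α * c ^ 2) := by
      have h2c : Real.sqrt 2 ^ 2 * (α * c ^ 2) = 2 * (α * c ^ 2) := by rw [hs2]
      have h2a : Real.sqrt 2 ^ 2 * (α * a ^ 2) = 2 * (α * a ^ 2) := by rw [hs2]
      nlinarith [mul_nonneg hα.le (sq_nonneg ((1 + Real.sqrt 2) * a - c)), h2c, h2a]
    exact le_of_mul_le_mul_left key hpos
  have e2 : 2 * α * b * c ≤ α * b ^ 2 + α * c ^ 2 := by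
    nlinarith [mul_nonneg hα.le (sq_nonneg (b - c))]
  have h2 : 2 * (α * (a + b)) * c ≤
      α * (1 + Real.sqrt 2) * a ^ 2 + α * b ^ 2 + Real.sqrt 2 * α * c ^ 2 := by
    nlinarith [e1, e2]
  linarith
end

section
/- Let H be a real Hilbert space, C ⊆ H a nonempty closed convex set with metric projection P_C, F : H → H monotone, and α ∈ (0, √2 − 1). Let λ_n > 0 and x_n, x_{n+1}, y_n, y_{n−1} ∈ H with x_{n+1} = P_C(x_n − λ_n F(y_n)), and suppose that t_n := −‖x_{n+1} − x_n‖² + 2λ_n ⟨F(y_n), y_n − x_{n+1}⟩ + (1 − α(1+√2)) ‖x_n − y_n‖² − α ‖x_n − y_{n−1}‖² + (1 − √2 α) ‖x_{n+1} − y_n‖² ≤ 0. Then for every z ∈ S: ‖x_{n+1} − z‖² ≤ ‖x_n − z‖² − (1 − α(1+√2)) ‖x_n − y_n‖² − (1 − √2 α) ‖x_{n+1} − y_n‖² + α ‖x_n − y_{n−1}‖² − 2λ_n ⟨F(z), y_n − z⟩. -/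
open RealInnerProductSpace

/-- If `t_n ≤ 0`, then the key inequality (4.4) holds for the corresponding step. -/
theorem key_inequality_of_tn_nonpos
    {H : Type*} [NormedAddCommGroup H] [InnerProductSpace ℝ H] [CompleteSpace H]
    (C : Set H) (hC : C.Nonempty) (hCclosed : IsClosed C) (hCconv : Convex ℝ C)
    (P : H → H)
    (hPmem : ∀ u : H, P u ∈ C)
    (hPchar : ∀ u : H, ∀ y ∈ C, 0 ≤ ⟪P u - u, y - P u⟫)
    (F : H → H)
    (hmono : ∀ x y : H, 0 ≤ ⟪F x - F y, x - y⟫)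
    (α : ℝ) (hα : α ∈ Set.Ioo (0 : ℝ) (Real.sqrt 2 - 1))
    (lamn : ℝ) (hlamn : 0 < lamn)
    (xn xnext yn yprev : H)
    (hxnext : xnext = P (xn - lamn • F yn))
    (htn : -‖xnext - xn‖ ^ 2 + 2 * lamn * ⟪F yn, yn - xnext⟫
        + (1 - α * (1 + Real.sqrt 2)) * ‖xn - yn‖ ^ 2
        - α * ‖xn - yprev‖ ^ 2
        + (1 - Real.sqrt 2 * α) * ‖xnext - yn‖ ^ 2 ≤ 0)
    (z : H) (hzC : z ∈ C) (hzS : ∀ w ∈ C, 0 ≤ ⟪F z, w - z⟫) :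
    ‖xnext - z‖ ^ 2 ≤
      ‖xn - z‖ ^ 2 - (1 - α * (1 + Real.sqrt 2)) * ‖xn - yn‖ ^ 2
        - (1 - Real.sqrt 2 * α) * ‖xnext - yn‖ ^ 2
        + α * ‖xn - yprev‖ ^ 2 - 2 * lamn * ⟪F z, yn - z⟫ := by
  -- projection characterization at u = xn - lamn • F yn, y = z
  have hproj : 0 ≤ ⟪xnext - (xn - lamn • F yn), z - xnext⟫ := by
    rw [hxnext]; exact hPchar _ z hzC
  have hproj' : 0 ≤ ⟪xnext - xn, z - xnext⟫ + lamn * ⟪F yn, z - xnext⟫ := by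
    have : xnext - (xn - lamn • F yn) = (xnext - xn) + lamn • F yn := by abel
    rw [this, inner_add_left, real_inner_smul_left] at hproj
    linarith
  -- monotonicity at yn, z
  have hm : 0 ≤ ⟪F yn, yn - z⟫ - ⟪F z, yn - z⟫ := by
    have := hmono yn z
    rwa [inner_sub_left] at this
  -- norm identity
  have hid : ‖xnext - z‖ ^ 2 = ‖xn - z‖ ^ 2 - ‖xnext - xn‖ ^ 2
      + 2 * ⟪xnext - xn, xnext - z⟫ := by
    have h1 : ‖xnext - z‖ ^ 2 = ‖xnext - xn‖ ^ 2 + 2 * ⟪xnext - xn, xn - z⟫ + ‖xn - z‖ ^ 2 := by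
      have he : xnext - z = (xnext - xn) + (xn - z) := by abel
      rw [he]; exact norm_add_sq_real _ _
    have h2 : ⟪xnext - xn, xnext - z⟫ = ⟪xnext - xn, xnext - xn⟫ + ⟪xnext - xn, xn - z⟫ := by
      rw [← inner_add_right]; congr 1; abel
    rw [real_inner_self_eq_norm_sq] at h2
    linarith [h1, h2]
  -- decompose inner products
  have hdec : ⟪F yn, z - xnext⟫ = -⟪F yn, yn - z⟫ + ⟪F yn, yn - xnext⟫ := by
    rw [← inner_neg_right, ← inner_add_right]; congr 1; abel
  have hflip : ⟪xnext - xn, z - xnext⟫ = -⟪xnext - xn, xnext - z⟫ := by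
    rw [← inner_neg_right]; congr 1; abel
  rw [hflip, hdec] at hproj'
  nlinarith [htn, hproj', hm, hid, hlamn]
end

section
/- Let α ∈ (0, √2 − 1) and let (x_n) ⊆ C, (y_n) ⊆ H, (λ_n) ⊆ (0, ∞) and (τ_n) ⊆ (0, 1] be sequences such that for all n ≥ 1: y_n = (1 + τ_n) x_n − τ_n x_{n−1}, x_{n+1} = P_C(x_n − λ_n F(y_n)), τ_n λ_n ≤ (1 + τ_{n−1}) λ_{n−1}, and for every z ∈ S the inequality ‖x_{n+1} − z‖² ≤ ‖x_n − z‖² − (1 − α(1+√2)) ‖x_n − y_n‖² − (1 − √2 α) ‖x_{n+1} − y_n‖² + α ‖x_n − y_{n−1}‖² − 2λ_n ⟨F(z), y_n − z⟩ holds. Then (x_n) is bounded, lim_{n→∞} ‖x_n − y_n‖ = 0, lim_{n→∞} ‖x_{n+1} − y_n‖ = 0, and lim_{n→∞} ‖x_{n+1} − x_n‖ = 0. -/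
/-!
Fix a solution `z` of the variational inequality. Adding `α ‖x (n+1) - y n‖²` and the inertial
term `2 λ_n (1 + τ_n) ⟪F z, x n - z⟫ ≥ 0` to `‖x (n+1) - z‖²` gives a nonnegative Lyapunov
function. Writing `⟪F z, y_{n+1} - z⟫` through `x_{n+1}` and `x_n` and using
`τ_{n+1} λ_{n+1} ≤ (1 + τ_n) λ_n`, the key inequality makes it decrease by at least
`(1 - α(1 + √2)) (‖x - y‖² + ‖x⁺ - y‖²)` per step, since `(1 - √2 α) - α = 1 - α(1 + √2)`,
and `α < √2 - 1` makes this coefficient positive. Hence the iterates stay bounded and the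
decrements are summable.
-/

open RealInnerProductSpace Filter Topology

theorem tendsto_zero_of_succ_add_mul_le {G w : ℕ → ℝ} {c : ℝ} (hc : 0 < c)
    (hG : ∀ n, 0 ≤ G n) (hw : ∀ n, 0 ≤ w n) (h : ∀ n, G (n + 1) + c * w n ≤ G n) :
    Tendsto w atTop (𝓝 0) := by
  have hsum : ∀ N, ∑ n ∈ Finset.range N, c * w n ≤ G 0 - G N := by
    intro N
    induction N with
    | zero => simp
    | succ N ih => rw [Finset.sum_range_succ]; linarith [h N]
  have hcw : Summable fun n => c * w n :=
    summable_of_sum_range_le (c := G 0) (fun n => mul_nonneg hc.le (hw n)) fun N => by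
      linarith [hsum N, hG N]
  exact ((summable_mul_left_iff hc.ne').mp hcw).tendsto_atTop_zero

theorem tendsto_zero_of_sq_add_sq {ι : Type*} {l : Filter ι} {a b : ι → ℝ}
    (h : Tendsto (fun i => a i ^ 2 + b i ^ 2) l (𝓝 0)) :
    Tendsto a l (𝓝 0) ∧ Tendsto b l (𝓝 0) := by
  have hsqrt : Tendsto (fun i => √(a i ^ 2 + b i ^ 2)) l (𝓝 0) := by
    simpa using h.sqrt
  exact ⟨squeeze_zero_norm (fun i => Real.abs_le_sqrt (by nlinarith [sq_nonneg (b i)])) hsqrt,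
    squeeze_zero_norm (fun i => Real.abs_le_sqrt (by nlinarith [sq_nonneg (a i)])) hsqrt⟩

section Lyapunov

variable {H : Type*} [NormedAddCommGroup H] [InnerProductSpace ℝ H]
  {F : H → H} {x y : ℕ → H} {lam τ : ℕ → ℝ} {α : ℝ} {z : H}

noncomputable def lyapunov (F : H → H) (x y : ℕ → H) (lam τ : ℕ → ℝ) (α : ℝ) (z : H)
    (n : ℕ) : ℝ :=
  ‖x (n + 1) - z‖ ^ 2 + α * ‖x (n + 1) - y n‖ ^ 2 + 2 * lam n * (1 + τ n) * ⟪F z, x n - z⟫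

theorem sq_norm_sub_le_lyapunov {n : ℕ} (hα : 0 ≤ α) (hlam : 0 ≤ lam n) (hτ : 0 ≤ 1 + τ n)
    (hz : 0 ≤ ⟪F z, x n - z⟫) :
    ‖x (n + 1) - z‖ ^ 2 ≤ lyapunov F x y lam τ α z n := by
  have := mul_nonneg hα (sq_nonneg ‖x (n + 1) - y n‖)
  have := mul_nonneg (mul_nonneg (mul_nonneg zero_le_two hlam) hτ) hz
  unfold lyapunov
  linarith

theorem lyapunov_succ_add_le {n : ℕ}
    (hy : y (n + 1) = (1 + τ (n + 1)) • x (n + 1) - τ (n + 1) • x n)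
    (hlam : τ (n + 1) * lam (n + 1) ≤ (1 + τ n) * lam n)
    (hz : 0 ≤ ⟪F z, x n - z⟫)
    (hkey : ‖x (n + 2) - z‖ ^ 2 ≤
      ‖x (n + 1) - z‖ ^ 2 - (1 - α * (1 + √2)) * ‖x (n + 1) - y (n + 1)‖ ^ 2
        - (1 - √2 * α) * ‖x (n + 2) - y (n + 1)‖ ^ 2
        + α * ‖x (n + 1) - y n‖ ^ 2 - 2 * lam (n + 1) * ⟪F z, y (n + 1) - z⟫) :
    lyapunov F x y lam τ α z (n + 1)
        + (1 - α * (1 + √2)) * (‖x (n + 1) - y (n + 1)‖ ^ 2 + ‖x (n + 2) - y (n + 1)‖ ^ 2)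
      ≤ lyapunov F x y lam τ α z n := by
  have hinner : ⟪F z, y (n + 1) - z⟫ =
      (1 + τ (n + 1)) * ⟪F z, x (n + 1) - z⟫ - τ (n + 1) * ⟪F z, x n - z⟫ := by
    have : y (n + 1) - z = (1 + τ (n + 1)) • (x (n + 1) - z) - τ (n + 1) • (x n - z) := by
      rw [hy]; module
    rw [this, inner_sub_right, inner_smul_right, inner_smul_right]
  have hinertia := mul_le_mul_of_nonneg_right hlam hz
  rw [hinner] at hkey
  unfold lyapunov
  linarith

end Lyapunov

theorem bounded_and_asymptotic_regularity_modified_general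
    {H : Type*} [NormedAddCommGroup H] [InnerProductSpace ℝ H]
    (C : Set H)
    (F : H → H)
    (hS : ∃ z ∈ C, ∀ w ∈ C, 0 ≤ ⟪F z, w - z⟫)
    (α : ℝ) (hα : α ∈ Set.Ioo (0 : ℝ) (Real.sqrt 2 - 1))
    (x y : ℕ → H) (lam : ℕ → ℝ) (τ : ℕ → ℝ)
    (hxC : ∀ n, x n ∈ C)
    (hlampos : ∀ n, 0 < lam n)
    (hτ : ∀ n, τ n ∈ Set.Ioc (0 : ℝ) 1)
    (hyrec : ∀ n : ℕ, 1 ≤ n → y n = (1 + τ n) • x n - τ n • x (n - 1))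
    (hlamrec : ∀ n : ℕ, 1 ≤ n → τ n * lam n ≤ (1 + τ (n - 1)) * lam (n - 1))
    (hkey : ∀ n : ℕ, 1 ≤ n → ∀ z : H, z ∈ C → (∀ w ∈ C, 0 ≤ ⟪F z, w - z⟫) →
      ‖x (n + 1) - z‖ ^ 2 ≤
        ‖x n - z‖ ^ 2 - (1 - α * (1 + Real.sqrt 2)) * ‖x n - y n‖ ^ 2
          - (1 - Real.sqrt 2 * α) * ‖x (n + 1) - y n‖ ^ 2
          + α * ‖x n - y (n - 1)‖ ^ 2 - 2 * lam n * ⟪F z, y n - z⟫) :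
    Bornology.IsBounded (Set.range x) ∧
      Filter.Tendsto (fun n : ℕ => ‖x n - y n‖) Filter.atTop (nhds 0) ∧
      Filter.Tendsto (fun n : ℕ => ‖x (n + 1) - y n‖) Filter.atTop (nhds 0) ∧
      Filter.Tendsto (fun n : ℕ => ‖x (n + 1) - x n‖) Filter.atTop (nhds 0) := by
  obtain ⟨z, hzC, hz⟩ := hS
  set V := lyapunov F x y lam τ α z
  have hc : 0 < 1 - α * (1 + √2) := by
    have h2 : √2 * √2 = 2 := Real.mul_self_sqrt zero_le_two
    nlinarith [mul_lt_mul_of_pos_right hα.2 (by positivity : (0 : ℝ) < 1 + √2)]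
  have hle : ∀ n, ‖x (n + 1) - z‖ ^ 2 ≤ V n := fun n =>
    sq_norm_sub_le_lyapunov hα.1.le (hlampos n).le (by linarith [(hτ n).1]) (hz _ (hxC n))
  have hdecr : ∀ n, V (n + 1) + (1 - α * (1 + √2)) *
      (‖x (n + 1) - y (n + 1)‖ ^ 2 + ‖x (n + 2) - y (n + 1)‖ ^ 2) ≤ V n := fun n =>
    lyapunov_succ_add_le (by simpa using hyrec (n + 1) (by omega))
      (by simpa using hlamrec (n + 1) (by omega)) (hz _ (hxC n))
      (by simpa using hkey (n + 1) (by omega) z hzC hz)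
  obtain ⟨hxy, hxy'⟩ := tendsto_zero_of_sq_add_sq (tendsto_zero_of_succ_add_mul_le hc
    (fun n => (sq_nonneg _).trans (hle n)) (fun n => by positivity) hdecr)
  have hxy₀ := (tendsto_add_atTop_iff_nat (f := fun n => ‖x n - y n‖) 1).mp hxy
  have hxy₁ := (tendsto_add_atTop_iff_nat (f := fun n => ‖x (n + 1) - y n‖) 1).mp hxy'
  have hanti : Antitone V := antitone_nat_of_succ_le fun n =>
    le_of_add_le_of_nonneg_left (hdecr n) (by positivity)
  have hbdd : Bornology.IsBounded (Set.range fun n => x (n + 1)) := by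
    refine (Metric.isBounded_closedBall (x := z) (r := √(V 0))).subset ?_
    rintro _ ⟨n, rfl⟩
    simpa [dist_eq_norm] using Real.le_sqrt_of_sq_le ((hle n).trans (hanti (Nat.zero_le n)))
  refine ⟨?_, hxy₀, hxy₁, squeeze_zero (fun n => norm_nonneg _) (fun n => ?_)
    (by simpa using hxy₁.add hxy₀)⟩
  · rw [← Nat.range_of_succ]
    exact Bornology.isBounded_singleton.union hbdd
  · simpa only [norm_sub_rev (x n) (y n)] using norm_sub_le_norm_sub_add_norm_sub _ (y n) _

/-- Boundedness and asymptotic regularity for the nonstationary algorithm. -/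
theorem bounded_and_asymptotic_regularity_modified
    {H : Type*} [NormedAddCommGroup H] [InnerProductSpace ℝ H] [CompleteSpace H]
    (C : Set H) (hC : C.Nonempty) (hCclosed : IsClosed C) (hCconv : Convex ℝ C)
    (P : H → H)
    (hPmem : ∀ u : H, P u ∈ C)
    (hPchar : ∀ u : H, ∀ y ∈ C, 0 ≤ ⟪P u - u, y - P u⟫)
    (F : H → H)
    (hmono : ∀ x y : H, 0 ≤ ⟪F x - F y, x - y⟫)
    (hS : ∃ z ∈ C, ∀ w ∈ C, 0 ≤ ⟪F z, w - z⟫)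
    (α : ℝ) (hα : α ∈ Set.Ioo (0 : ℝ) (Real.sqrt 2 - 1))
    (x y : ℕ → H) (lam : ℕ → ℝ) (τ : ℕ → ℝ)
    (hxC : ∀ n, x n ∈ C)
    (hlampos : ∀ n, 0 < lam n)
    (hτ : ∀ n, τ n ∈ Set.Ioc (0 : ℝ) 1)
    (hyrec : ∀ n : ℕ, 1 ≤ n → y n = (1 + τ n) • x n - τ n • x (n - 1))
    (hxrec : ∀ n : ℕ, 1 ≤ n → x (n + 1) = P (x n - lam n • F (y n)))
    (hlamrec : ∀ n : ℕ, 1 ≤ n → τ n * lam n ≤ (1 + τ (n - 1)) * lam (n - 1))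
    (hkey : ∀ n : ℕ, 1 ≤ n → ∀ z : H, z ∈ C → (∀ w ∈ C, 0 ≤ ⟪F z, w - z⟫) →
      ‖x (n + 1) - z‖ ^ 2 ≤
        ‖x n - z‖ ^ 2 - (1 - α * (1 + Real.sqrt 2)) * ‖x n - y n‖ ^ 2
          - (1 - Real.sqrt 2 * α) * ‖x (n + 1) - y n‖ ^ 2
          + α * ‖x n - y (n - 1)‖ ^ 2 - 2 * lam n * ⟪F z, y n - z⟫) :
    Bornology.IsBounded (Set.range x) ∧
      Filter.Tendsto (fun n : ℕ => ‖x n - y n‖) Filter.atTop (nhds 0) ∧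
      Filter.Tendsto (fun n : ℕ => ‖x (n + 1) - y n‖) Filter.atTop (nhds 0) ∧
      Filter.Tendsto (fun n : ℕ => ‖x (n + 1) - x n‖) Filter.atTop (nhds 0) :=
  bounded_and_asymptotic_regularity_modified_general C F hS α hα x y lam τ hxC hlampos hτ hyrec
    hlamrec hkey
end

section
/- (Minty's lemma) Let H be a real Hilbert space, C ⊆ H a nonempty closed convex set, and F : C → H a continuous monotone mapping. Then for x* ∈ C the following are equivalent: (i) ⟨F(x*), x − x*⟩ ≥ 0 for all x ∈ C; (ii) ⟨F(y), y − x*⟩ ≥ 0 for all y ∈ C. -/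
open RealInnerProductSpace

/-- Lemma 2.2 (Minty): for a continuous monotone mapping `F` on a nonempty closed
convex set `C`, `x*` solves the variational inequality iff it solves the Minty
(dual) variational inequality. -/
theorem minty_lemma
    {H : Type*} [NormedAddCommGroup H] [InnerProductSpace ℝ H] [CompleteSpace H]
    (C : Set H) (hC : C.Nonempty) (hCclosed : IsClosed C) (hCconv : Convex ℝ C)
    (F : H → H)
    (hcont : ContinuousOn F C)
    (hmono : ∀ x ∈ C, ∀ y ∈ C, 0 ≤ ⟪F x - F y, x - y⟫)
    (xstar : H) (hxstar : xstar ∈ C) :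
    (∀ x ∈ C, 0 ≤ ⟪F xstar, x - xstar⟫) ↔
      (∀ y ∈ C, 0 ≤ ⟪F y, y - xstar⟫) := by
  constructor
  · intro h y hy
    have h1 := hmono y hy xstar hxstar
    have h2 := h y hy
    rw [inner_sub_left] at h1
    linarith
  · intro h y hy
    set γ : ℝ → H := fun t => xstar + t • (y - xstar) with hγ
    have hγmem : ∀ t ∈ Set.Icc (0:ℝ) 1, γ t ∈ C := by
      intro t ht
      have h2 := hCconv hxstar hy (a := 1 - t) (b := t) (by linarith [ht.2]) ht.1 (by ring)
      have : (1 - t) • xstar + t • y = γ t := by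
        simp only [γ, smul_sub, sub_smul, one_smul]; abel
      rwa [this] at h2
    have key : ∀ t ∈ Set.Ioc (0:ℝ) 1, 0 ≤ ⟪F (γ t), y - xstar⟫ := by
      intro t ht
      have hmem : γ t ∈ C := hγmem t ⟨le_of_lt ht.1, ht.2⟩
      have h1 := h (γ t) hmem
      have heq : γ t - xstar = t • (y - xstar) := by simp [γ]
      rw [heq, real_inner_smul_right] at h1
      exact nonneg_of_mul_nonneg_right h1 ht.1
    have hγ0 : γ 0 = xstar := by simp [γ]
    haveI hne : (nhdsWithin (0:ℝ) (Set.Ioc 0 1)).NeBot := by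
      refine mem_closure_iff_nhdsWithin_neBot.mp ?_
      rw [closure_Ioc one_ne_zero.symm]
      exact ⟨le_refl 0, zero_le_one⟩
    have hγcont : ContinuousWithinAt γ (Set.Ioc 0 1) 0 :=
      Continuous.continuousWithinAt (by continuity)
    have hmaps : Set.MapsTo γ (Set.Ioc 0 1) C := fun t ht =>
      hγmem t ⟨le_of_lt ht.1, ht.2⟩
    have hγt : Filter.Tendsto γ (nhdsWithin 0 (Set.Ioc 0 1)) (nhdsWithin xstar C) := by
      have := hγcont.tendsto_nhdsWithin hmaps
      rwa [hγ0] at this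
    have hFt : Filter.Tendsto (fun t => F (γ t)) (nhdsWithin 0 (Set.Ioc 0 1))
        (nhds (F xstar)) :=
      (hcont.continuousWithinAt hxstar).tendsto.comp hγt
    have hinner : Filter.Tendsto (fun t => ⟪F (γ t), y - xstar⟫)
        (nhdsWithin 0 (Set.Ioc 0 1)) (nhds ⟪F xstar, y - xstar⟫) :=
      hFt.inner tendsto_const_nhds
    exact ge_of_tendsto hinner (Filter.eventually_of_mem self_mem_nhdsWithin key)
end
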